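/- arXiv:2008.04734 — 12 statements merged into one kernel-verified Lean document; each statement's English description precedes it below -/
import Mathlib

section
/- For every ε ∈ (0,1], every q ∈ [1,∞), and every x ∈ ℝ^p, there exists a unique nonnegative real number v satisfying ∑_{i=1}^p (|x_i| − (1−ε)v)_+^q = (ε v)^q, where (t)_+ = max(t,0). -/
/-!
The left-hand side `∑ i, (|x i| - (1 - ε) v)₊ ^ q` is continuous and antitone in `v ≥ 0`, while
`(ε v) ^ q` is continuous and strictly increasing, so their graphs cross at most once. They do
cross: at `v = 0` the left side is `∑ i, |x i| ^ q ≥ 0`, and at `v = (∑ i, |x i| ^ q) ^ (1/q) / ε`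
the right side has grown to `∑ i, |x i| ^ q` while the left side has not.
-/

open Set

theorem existsUnique_eq_of_antitoneOn_of_strictMonoOn {f g : ℝ → ℝ} {a M : ℝ}
    (hf : ContinuousOn f (Ici a)) (hg : ContinuousOn g (Ici a))
    (hf_anti : AntitoneOn f (Ici a)) (hg_mono : StrictMonoOn g (Ici a))
    (ha : g a ≤ f a) (haM : a ≤ M) (hM : f M ≤ g M) :
    ∃! v, a ≤ v ∧ f v = g v := by
  obtain ⟨v, hv, hfv⟩ : ∃ v ∈ Icc a M, (f - g) v = 0 :=
    intermediate_value_Icc' haM ((hf.sub hg).mono Icc_subset_Ici_self)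
      ⟨sub_nonpos.2 hM, sub_nonneg.2 ha⟩
  refine ⟨v, ⟨hv.1, sub_eq_zero.1 hfv⟩, fun w ⟨hw, hfw⟩ => ?_⟩
  have hfg_anti : StrictAntiOn (f - g) (Ici a) := fun s hs t ht hst => by
    have := hf_anti hs ht hst.le
    have := hg_mono hs ht hst
    simp only [Pi.sub_apply]
    linarith
  exact hfg_anti.injOn hw hv.1 (by rw [hfv, Pi.sub_apply, hfw, sub_self])

section SoftThreshold

variable {ι : Type*} [Fintype ι] (x : ι → ℝ) {c q : ℝ}

theorem continuous_sum_rpow_max_abs_sub_mul (hq : 0 ≤ q) :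
    Continuous fun v => ∑ i, (max (|x i| - c * v) 0) ^ q :=
  continuous_finsetSum _ fun _ _ => (Real.continuous_rpow_const hq).comp
    ((continuous_const.sub (continuous_const_mul c)).max continuous_const)

theorem antitone_sum_rpow_max_abs_sub_mul (hc : 0 ≤ c) (hq : 0 ≤ q) :
    Antitone fun v => ∑ i, (max (|x i| - c * v) 0) ^ q := fun _ _ hvw =>
  Finset.sum_le_sum fun _ _ => Real.rpow_le_rpow (le_max_right _ _)
    (max_le_max_right _ (by gcongr)) hq

end SoftThreshold

theorem strictMonoOn_mul_rpow {ε q : ℝ} (hε : 0 < ε) (hq : 0 < q) :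
    StrictMonoOn (fun v => (ε * v) ^ q) (Ici 0) := fun _ ha _ _ hab =>
  Real.rpow_lt_rpow (mul_nonneg hε.le ha) (mul_lt_mul_of_pos_left hab hε) hq

/-- For every `ε ∈ (0,1]`, every `q ∈ [1,∞)`, and every `x ∈ ℝ^p`,
there exists a unique nonnegative real `v` with
`∑ i, (|x i| - (1-ε)v)₊ ^ q = (ε v) ^ q`. -/
theorem epsq_norm_exists_unique (p : ℕ) (ε q : ℝ) (hε0 : 0 < ε) (hε1 : ε ≤ 1)
    (hq : 1 ≤ q) (x : Fin p → ℝ) :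
    ∃! v : ℝ, 0 ≤ v ∧
      ∑ i : Fin p, (max (|x i| - (1 - ε) * v) 0) ^ q = (ε * v) ^ q := by
  have hq0 : 0 < q := one_pos.trans_le hq
  have hc : 0 ≤ 1 - ε := sub_nonneg.2 hε1
  set S := ∑ i, |x i| ^ q
  have hS : 0 ≤ S := Finset.sum_nonneg fun i _ => Real.rpow_nonneg (abs_nonneg _) q
  have h_at_zero : ∑ i, (max (|x i| - (1 - ε) * 0) 0) ^ q = S := by
    simp only [mul_zero, sub_zero, abs_nonneg, max_eq_left, S]
  have h_at_M : (ε * (S ^ q⁻¹ / ε)) ^ q = S := by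
    rw [mul_div_cancel₀ _ hε0.ne', Real.rpow_inv_rpow hS hq0.ne']
  refine existsUnique_eq_of_antitoneOn_of_strictMonoOn
    (continuous_sum_rpow_max_abs_sub_mul x hq0.le).continuousOn
    ((Real.continuous_rpow_const hq0.le).comp (continuous_const_mul ε)).continuousOn
    ((antitone_sum_rpow_max_abs_sub_mul x hc hq0.le).antitoneOn _)
    (strictMonoOn_mul_rpow hε0 hq0) ?_ (by positivity : 0 ≤ S ^ q⁻¹ / ε) ?_
  · rw [h_at_zero, mul_zero, Real.zero_rpow hq0.ne']
    exact hS
  · rw [h_at_M, ← h_at_zero]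
    exact antitone_sum_rpow_max_abs_sub_mul x hc hq0.le (by positivity)
end

section
/- Fix ε ∈ (0,1] and q ∈ [1,∞). For all x, y ∈ ℝ^p, the εq-norm satisfies the triangle inequality ‖x + y‖_{εq} ≤ ‖x‖_{εq} + ‖y‖_{εq}. Consequently x ↦ ‖x‖_{εq} is a norm on ℝ^p. -/
/-- Let `N` be the εq-norm (the unique nonnegative solution of the
defining equation).  Then `N` satisfies the triangle inequality, and consequently
`N` is a norm on `ℝ^p` (nonnegative, absolutely homogeneous, definite, subadditive). -/
theorem epsq_norm_triangle_and_is_norm (p : ℕ) (ε q : ℝ)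
    (hε0 : 0 < ε) (hε1 : ε ≤ 1) (hq : 1 ≤ q)
    (N : (Fin p → ℝ) → ℝ)
    (hN0 : ∀ x : Fin p → ℝ, 0 ≤ N x)
    (hNeq : ∀ x : Fin p → ℝ,
      ∑ i : Fin p, (max (|x i| - (1 - ε) * N x) 0) ^ q = (ε * N x) ^ q) :
    (∀ x y : Fin p → ℝ, N (x + y) ≤ N x + N y) ∧
    (∀ (a : ℝ) (x : Fin p → ℝ), N (a • x) = |a| * N x) ∧
    (∀ x : Fin p → ℝ, N x = 0 ↔ x = 0) := by
  have hq0 : 0 < q := lt_of_lt_of_le one_pos hq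
  have h1ε : 0 ≤ 1 - ε := by linarith
  -- comparison lemma: if the defining quantity at `w` is ≤ (εw)^q, then `N x ≤ w`
  have key : ∀ (x : Fin p → ℝ) (w : ℝ), 0 ≤ w →
      (∑ i : Fin p, (max (|x i| - (1 - ε) * w) 0) ^ q) ≤ (ε * w) ^ q → N x ≤ w := by
    intro x w hw hle
    by_contra hcon
    push_neg at hcon
    have hmono : ∀ i : Fin p,
        (max (|x i| - (1 - ε) * N x) 0) ^ q ≤ (max (|x i| - (1 - ε) * w) 0) ^ q := by
      intro i
      apply Real.rpow_le_rpow (le_max_right _ _) _ hq0.le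
      exact max_le_max (by nlinarith [hcon.le]) le_rfl
    have h1 : (ε * N x) ^ q ≤ (ε * w) ^ q := by
      calc (ε * N x) ^ q = ∑ i : Fin p, (max (|x i| - (1 - ε) * N x) 0) ^ q := (hNeq x).symm
        _ ≤ ∑ i : Fin p, (max (|x i| - (1 - ε) * w) 0) ^ q :=
            Finset.sum_le_sum (fun i _ => hmono i)
        _ ≤ (ε * w) ^ q := hle
    have h2 : (ε * w) ^ q < (ε * N x) ^ q :=
      Real.rpow_lt_rpow (by positivity) (by nlinarith) hq0
    linarith
  -- uniqueness: any nonnegative solution of the equation equals `N x`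
  have uniq : ∀ (x : Fin p → ℝ) (w : ℝ), 0 ≤ w →
      (∑ i : Fin p, (max (|x i| - (1 - ε) * w) 0) ^ q) = (ε * w) ^ q → N x = w := by
    intro x w hw heq
    refine le_antisymm (key x w hw heq.le) ?_
    by_contra hcon
    push_neg at hcon
    have hmono : ∀ i : Fin p,
        (max (|x i| - (1 - ε) * w) 0) ^ q ≤ (max (|x i| - (1 - ε) * N x) 0) ^ q := by
      intro i
      apply Real.rpow_le_rpow (le_max_right _ _) _ hq0.le
      exact max_le_max (by nlinarith [hN0 x]) le_rfl
    have h1 : (ε * w) ^ q ≤ (ε * N x) ^ q := by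
      calc (ε * w) ^ q = ∑ i : Fin p, (max (|x i| - (1 - ε) * w) 0) ^ q := heq.symm
        _ ≤ ∑ i : Fin p, (max (|x i| - (1 - ε) * N x) 0) ^ q :=
            Finset.sum_le_sum (fun i _ => hmono i)
        _ = (ε * N x) ^ q := hNeq x
    have h2 : (ε * N x) ^ q < (ε * w) ^ q :=
      Real.rpow_lt_rpow (mul_nonneg hε0.le (hN0 x)) (by nlinarith [hN0 x]) hq0
    linarith
  refine ⟨?_, ?_, ?_⟩
  · -- triangle inequality
    intro x y
    apply key (x + y) (N x + N y) (add_nonneg (hN0 x) (hN0 y))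
    have ha0 : ∀ i : Fin p, (0:ℝ) ≤ max (|x i| - (1 - ε) * N x) 0 := fun i => le_max_right _ _
    have hb0 : ∀ i : Fin p, (0:ℝ) ≤ max (|y i| - (1 - ε) * N y) 0 := fun i => le_max_right _ _
    set a : Fin p → ℝ := fun i => max (|x i| - (1 - ε) * N x) 0 with ha
    set b : Fin p → ℝ := fun i => max (|y i| - (1 - ε) * N y) 0 with hb
    have hstep1 : ∀ i : Fin p,
        (max (|(x + y) i| - (1 - ε) * (N x + N y)) 0) ^ q ≤ (a i + b i) ^ q := by
      intro i
      apply Real.rpow_le_rpow (le_max_right _ _) _ hq0.le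
      apply max_le _ (add_nonneg (ha0 i) (hb0 i))
      have habs : |x i + y i| ≤ |x i| + |y i| := abs_add_le _ _
      have h1 : |x i| - (1 - ε) * N x ≤ a i := le_max_left _ _
      have h2 : |y i| - (1 - ε) * N y ≤ b i := le_max_left _ _
      simp only [Pi.add_apply]
      nlinarith
    have hmink : (∑ i : Fin p, (a i + b i) ^ q) ^ (1 / q) ≤
        (∑ i : Fin p, a i ^ q) ^ (1 / q) + (∑ i : Fin p, b i ^ q) ^ (1 / q) :=
      Real.Lp_add_le_of_nonneg (f := a) (g := b) Finset.univ hq (fun i _ => ha0 i) (fun i _ => hb0 i)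
    have hsuma : ∑ i : Fin p, a i ^ q = (ε * N x) ^ q := hNeq x
    have hsumb : ∑ i : Fin p, b i ^ q = (ε * N y) ^ q := hNeq y
    have hsa : (∑ i : Fin p, a i ^ q) ^ (1 / q) = ε * N x := by
      rw [hsuma, ← Real.rpow_mul (mul_nonneg hε0.le (hN0 x)), mul_one_div, div_self hq0.ne',
        Real.rpow_one]
    have hsb : (∑ i : Fin p, b i ^ q) ^ (1 / q) = ε * N y := by
      rw [hsumb, ← Real.rpow_mul (mul_nonneg hε0.le (hN0 y)), mul_one_div, div_self hq0.ne',
        Real.rpow_one]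
    have hab0 : (0:ℝ) ≤ ∑ i : Fin p, (a i + b i) ^ q :=
      Finset.sum_nonneg fun i _ => Real.rpow_nonneg (add_nonneg (ha0 i) (hb0 i)) q
    have hS : ∑ i : Fin p, (a i + b i) ^ q = ((∑ i : Fin p, (a i + b i) ^ q) ^ (1 / q)) ^ q := by
      rw [← Real.rpow_mul hab0, one_div, inv_mul_cancel₀ hq0.ne', Real.rpow_one]
    calc ∑ i : Fin p, (max (|(x + y) i| - (1 - ε) * (N x + N y)) 0) ^ q
        ≤ ∑ i : Fin p, (a i + b i) ^ q := Finset.sum_le_sum fun i _ => hstep1 i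
      _ = ((∑ i : Fin p, (a i + b i) ^ q) ^ (1 / q)) ^ q := hS
      _ ≤ (ε * N x + ε * N y) ^ q := by
          apply Real.rpow_le_rpow (Real.rpow_nonneg hab0 _) _ hq0.le
          rw [← hsa, ← hsb]; exact hmink
      _ = (ε * (N x + N y)) ^ q := by rw [mul_add]
  · -- absolute homogeneity
    intro a x
    apply uniq (a • x) (|a| * N x) (mul_nonneg (abs_nonneg a) (hN0 x))
    simp only [Pi.smul_apply, smul_eq_mul]
    calc ∑ i : Fin p, (max (|a * x i| - (1 - ε) * (|a| * N x)) 0) ^ q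
        = ∑ i : Fin p, (|a| * max (|x i| - (1 - ε) * N x) 0) ^ q := by
          refine Finset.sum_congr rfl fun i _ => ?_
          have h : |a * x i| - (1 - ε) * (|a| * N x) = |a| * (|x i| - (1 - ε) * N x) := by
            rw [abs_mul]; ring
          rw [h, mul_max_of_nonneg _ _ (abs_nonneg a), mul_zero]
      _ = ∑ i : Fin p, |a| ^ q * (max (|x i| - (1 - ε) * N x) 0) ^ q := by
          refine Finset.sum_congr rfl fun i _ => Real.mul_rpow (abs_nonneg a) (le_max_right _ _)
      _ = |a| ^ q * (ε * N x) ^ q := by rw [← Finset.mul_sum, hNeq x]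
      _ = (ε * (|a| * N x)) ^ q := by
          rw [← Real.mul_rpow (abs_nonneg a) (mul_nonneg hε0.le (hN0 x))]
          congr 1; ring
  · -- definiteness
    intro x
    constructor
    · intro h
      have he := hNeq x
      simp only [h, mul_zero, sub_zero, Real.zero_rpow hq0.ne'] at he
      have hterm : ∀ i ∈ (Finset.univ : Finset (Fin p)),
          (0:ℝ) ≤ (max (|x i|) 0) ^ q := fun i _ => Real.rpow_nonneg (le_max_right _ _) q
      have hz := (Finset.sum_eq_zero_iff_of_nonneg hterm).mp he
      funext i
      have hi := hz i (Finset.mem_univ i)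
      rw [max_eq_left (abs_nonneg _)] at hi
      have := (Real.rpow_eq_zero (abs_nonneg _) hq0.ne').mp hi
      simpa using abs_eq_zero.mp this
    · intro h
      subst h
      apply uniq 0 0 le_rfl
      simp [Real.zero_rpow hq0.ne']
end

section
/- For every ε ∈ (0,1], q ∈ [1,∞), and x ∈ ℝ^p, the εq-norm satisfies ‖x‖_q / (p^{1/q}(1−ε) + ε) ≤ ‖x‖_{εq} ≤ ‖x‖_q, where ‖x‖_q = (∑_{i=1}^p |x_i|^q)^{1/q}. Moreover both inequalities are attained: the upper bound holds with equality when x is a standard unit vector, and the lower bound holds with equality when x is the all-ones vector. -/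
/-!
Write `v` for the εq-norm of `x`. Since every summand of the defining equation is at most
`(εv)^q`, each `|xᵢ| ≤ v`, hence `(|xᵢ| - (1-ε)v)₊ ≤ ε|xᵢ|`; summing the `q`-th powers gives
`(εv)^q ≤ ε^q ‖x‖_q^q`, the upper bound. For the lower bound, `|xᵢ| ≤ (|xᵢ| - (1-ε)v)₊ + (1-ε)v`
and Minkowski's inequality give `‖x‖_q ≤ εv + p^{1/q}(1-ε)v`. For a vector whose entries have
absolute value `1` on a set `S` and `0` elsewhere, the `q`-th root of the equation is
`|S|^{1/q} (1 - (1-ε)v) = εv`, which yields both equality cases.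
-/

noncomputable def lqNorm (p : ℕ) (q : ℝ) (x : Fin p → ℝ) : ℝ :=
  (∑ i : Fin p, |x i| ^ q) ^ (1 / q)

open Finset Real

def IsEpsqNorm {ι : Type*} [Fintype ι] (ε q : ℝ) (x : ι → ℝ) (v : ℝ) : Prop :=
  0 ≤ v ∧ ∑ i, max (|x i| - (1 - ε) * v) 0 ^ q = (ε * v) ^ q

lemma max_sub_le_mul_self {ε a v : ℝ} (hε0 : 0 ≤ ε) (hε1 : ε ≤ 1) (ha : 0 ≤ a)
    (h : max (a - (1 - ε) * v) 0 ≤ ε * v) : max (a - (1 - ε) * v) 0 ≤ ε * a := by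
  have hav : a ≤ v := by linarith [le_max_left (a - (1 - ε) * v) 0]
  exact max_le (by nlinarith) (mul_nonneg hε0 ha)

lemma mul_eq_of_mul_max_sub_eq {ε v s : ℝ} (hε0 : 0 < ε)
    (h : s * max (1 - (1 - ε) * v) 0 = ε * v) : (s * (1 - ε) + ε) * v = s := by
  rcases le_or_gt 0 (1 - (1 - ε) * v) with hpos | hneg
  · rw [max_eq_left hpos] at h
    linear_combination -h
  · rw [max_eq_right hneg.le, mul_zero] at h
    have hv : v = 0 := by nlinarith
    subst hv
    linarith

lemma natCast_rpow_mul_one_sub_add_pos (n : ℕ) {ε : ℝ} (hε0 : 0 < ε) (hε1 : ε ≤ 1) (q : ℝ) :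
    0 < (n : ℝ) ^ (1 / q) * (1 - ε) + ε := by
  have := rpow_nonneg (Nat.cast_nonneg n) (1 / q)
  nlinarith

namespace IsEpsqNorm

variable {ι : Type*} [Fintype ι] {ε q v : ℝ} {x : ι → ℝ}

lemma le_lq (h : IsEpsqNorm ε q x v) (hε0 : 0 < ε) (hε1 : ε ≤ 1) (hq : 0 < q) :
    v ≤ (∑ i, |x i| ^ q) ^ (1 / q) := by
  obtain ⟨hv, hx⟩ := h
  have hterm (i : ι) : max (|x i| - (1 - ε) * v) 0 ≤ ε * |x i| := by
    refine max_sub_le_mul_self hε0.le hε1 (abs_nonneg _) ?_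
    rw [← rpow_le_rpow_iff (le_max_right _ _) (by positivity) hq, ← hx]
    exact single_le_sum (f := fun j => max (|x j| - (1 - ε) * v) 0 ^ q)
      (fun j _ => by positivity) (mem_univ i)
  have hpow : ε ^ q * v ^ q ≤ ε ^ q * ∑ i, |x i| ^ q := by
    rw [← mul_rpow hε0.le hv, ← hx, mul_sum]
    gcongr with i
    rw [← mul_rpow hε0.le (abs_nonneg _)]
    exact rpow_le_rpow (le_max_right _ _) (hterm i) hq.le
  rw [one_div, le_rpow_inv_iff_of_pos hv (by positivity) hq]
  exact le_of_mul_le_mul_left hpow (by positivity)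

lemma lq_le_mul (h : IsEpsqNorm ε q x v) (hε0 : 0 ≤ ε) (hε1 : ε ≤ 1) (hq : 1 ≤ q) :
    (∑ i, |x i| ^ q) ^ (1 / q) ≤ ((Fintype.card ι : ℝ) ^ (1 / q) * (1 - ε) + ε) * v := by
  obtain ⟨hv, hx⟩ := h
  have hq0 : 0 < q := by linarith
  have hr : 0 ≤ (1 - ε) * v := mul_nonneg (by linarith) hv
  calc (∑ i, |x i| ^ q) ^ (1 / q)
      ≤ (∑ i, (max (|x i| - (1 - ε) * v) 0 + (1 - ε) * v) ^ q) ^ (1 / q) := by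
        gcongr with i
        linarith [le_max_left (|x i| - (1 - ε) * v) 0]
    _ ≤ (∑ i, max (|x i| - (1 - ε) * v) 0 ^ q) ^ (1 / q)
          + (∑ _i : ι, ((1 - ε) * v) ^ q) ^ (1 / q) :=
        Lp_add_le_of_nonneg _ hq (fun _ _ => le_max_right _ _) (fun _ _ => hr)
    _ = ε * v + (Fintype.card ι : ℝ) ^ (1 / q) * ((1 - ε) * v) := by
        rw [hx, sum_const, card_univ, nsmul_eq_mul, one_div,
          mul_rpow (Nat.cast_nonneg _) (rpow_nonneg hr _),
          rpow_rpow_inv (by positivity) hq0.ne', rpow_rpow_inv hr hq0.ne']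
    _ = _ := by ring

variable [DecidableEq ι] {S : Finset ι}

lemma sum_comp_abs_of_abs_eq_indicator (hxS : ∀ j, |x j| = if j ∈ S then 1 else 0)
    (g : ℝ → ℝ) (hg : g 0 = 0) : ∑ j, g |x j| = #S * g 1 := by
  simp [hxS, apply_ite g, hg]

lemma lq_of_abs_eq_indicator (hxS : ∀ j, |x j| = if j ∈ S then 1 else 0) (hq : q ≠ 0) :
    (∑ j, |x j| ^ q) ^ (1 / q) = (#S : ℝ) ^ (1 / q) := by
  rw [sum_comp_abs_of_abs_eq_indicator hxS (· ^ q) (zero_rpow hq), one_rpow, mul_one]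

lemma mul_eq_of_abs_eq_indicator (h : IsEpsqNorm ε q x v)
    (hxS : ∀ j, |x j| = if j ∈ S then 1 else 0) (hε0 : 0 < ε) (hε1 : ε ≤ 1) (hq : 0 < q) :
    ((#S : ℝ) ^ (1 / q) * (1 - ε) + ε) * v = (#S : ℝ) ^ (1 / q) := by
  obtain ⟨hv, hx⟩ := h
  have hr : 0 ≤ (1 - ε) * v := mul_nonneg (by linarith) hv
  rw [sum_comp_abs_of_abs_eq_indicator hxS (fun a => max (a - (1 - ε) * v) 0 ^ q)
    (by simp [hr, zero_rpow hq.ne'])] at hx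
  apply mul_eq_of_mul_max_sub_eq hε0
  have hm : 0 ≤ max (1 - (1 - ε) * v) 0 := le_max_right _ _
  rw [one_div]
  have hroot := congrArg (· ^ q⁻¹) hx
  rwa [mul_rpow (Nat.cast_nonneg _) (rpow_nonneg hm _), rpow_rpow_inv hm hq.ne',
    rpow_rpow_inv (by positivity) hq.ne'] at hroot

lemma eq_lq_div_of_abs_eq_indicator (h : IsEpsqNorm ε q x v)
    (hxS : ∀ j, |x j| = if j ∈ S then 1 else 0) (hε0 : 0 < ε) (hε1 : ε ≤ 1) (hq : 0 < q) :
    v = (∑ j, |x j| ^ q) ^ (1 / q) / ((#S : ℝ) ^ (1 / q) * (1 - ε) + ε) := by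
  rw [eq_div_iff (natCast_rpow_mul_one_sub_add_pos #S hε0 hε1 q).ne',
    lq_of_abs_eq_indicator hxS hq.ne', mul_comm]
  exact h.mul_eq_of_abs_eq_indicator hxS hε0 hε1 hq

end IsEpsqNorm

/-- Let `N` be the εq-norm.  Then
`‖x‖_q / (p^{1/q}(1-ε) + ε) ≤ N x ≤ ‖x‖_q` for all `x`, the upper bound is attained
at every standard unit vector, and the lower bound is attained at the all-ones vector. -/
theorem epsq_norm_lq_bounds (p : ℕ) (ε q : ℝ)
    (hε0 : 0 < ε) (hε1 : ε ≤ 1) (hq : 1 ≤ q)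
    (N : (Fin p → ℝ) → ℝ)
    (hN0 : ∀ x : Fin p → ℝ, 0 ≤ N x)
    (hNeq : ∀ x : Fin p → ℝ,
      ∑ i : Fin p, (max (|x i| - (1 - ε) * N x) 0) ^ q = (ε * N x) ^ q) :
    (∀ x : Fin p → ℝ,
      lqNorm p q x / ((p : ℝ) ^ (1 / q) * (1 - ε) + ε) ≤ N x ∧ N x ≤ lqNorm p q x) ∧
    (∀ i : Fin p, N (Pi.single i 1) = lqNorm p q (Pi.single i 1)) ∧
    (N (fun _ => 1) =
      lqNorm p q (fun _ => 1) / ((p : ℝ) ^ (1 / q) * (1 - ε) + ε)) := by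
  have hq0 : 0 < q := by linarith
  have hN (x : Fin p → ℝ) : IsEpsqNorm ε q x (N x) := ⟨hN0 x, hNeq x⟩
  refine ⟨fun x => ⟨?_, (hN x).le_lq hε0 hε1 hq0⟩, fun i => ?_, ?_⟩
  · rw [div_le_iff₀' (natCast_rpow_mul_one_sub_add_pos p hε0 hε1 q)]
    simpa [lqNorm] using (hN x).lq_le_mul hε0.le hε1 hq
  · have hS (j : Fin p) :
        |(Pi.single i 1 : Fin p → ℝ) j| = if j ∈ ({i} : Finset (Fin p)) then 1 else 0 := by
      by_cases hji : j = i <;> simp [hji]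
    have h := (hN _).eq_lq_div_of_abs_eq_indicator hS hε0 hε1 hq0
    rwa [card_singleton, Nat.cast_one, one_rpow, one_mul, sub_add_cancel, div_one] at h
  · have h := (hN fun _ => 1).eq_lq_div_of_abs_eq_indicator (S := univ) (by simp) hε0 hε1 hq0
    rwa [card_univ, Fintype.card_fin] at h
end

section
/- For every ε ∈ (0,1], q ∈ [1,∞), and x ∈ ℝ^p, the εq-norm satisfies ‖x‖_2 / (p^{(1/2 − 1/q)_+}(p^{1/q}(1−ε) + ε)) ≤ ‖x‖_{εq} ≤ p^{(1/q − 1/2)_+} ‖x‖_2, where (t)_+ = max(t,0) in the exponents. -/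
/-- The Euclidean (ℓ_2) norm on `ℝ^p`. -/
noncomputable def l2Norm (p : ℕ) (x : Fin p → ℝ) : ℝ :=
  Real.sqrt (∑ i : Fin p, (x i) ^ 2)

open Finset in
/-- Monotonicity of ℓ_r norms: for `0 < a ≤ b`, `‖y‖_b ≤ ‖y‖_a`. -/
lemma lp_norm_anti {p : ℕ} (y : Fin p → ℝ) (hy : ∀ i, 0 ≤ y i) {a b : ℝ}
    (ha : 0 < a) (hab : a ≤ b) :
    (∑ i : Fin p, y i ^ b) ^ (1 / b) ≤ (∑ i : Fin p, y i ^ a) ^ (1 / a) := by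
  have hb : 0 < b := lt_of_lt_of_le ha hab
  set S : ℝ := ∑ i : Fin p, y i ^ a with hS
  have hS0 : 0 ≤ S := Finset.sum_nonneg fun i _ => Real.rpow_nonneg (hy i) a
  set t : ℝ := S ^ (1 / a) with hts
  have ht0 : 0 ≤ t := Real.rpow_nonneg hS0 _
  have hta : t ^ a = S := by
    rw [hts, one_div, Real.rpow_inv_rpow hS0 ha.ne']
  have hyt : ∀ i, y i ≤ t := by
    intro i
    have h1 : y i ^ a ≤ S :=
      Finset.single_le_sum (fun j _ => Real.rpow_nonneg (hy j) a) (Finset.mem_univ i)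
    have h2 : (y i ^ a) ^ (1 / a) ≤ S ^ (1 / a) :=
      Real.rpow_le_rpow (Real.rpow_nonneg (hy i) a) h1 (by positivity)
    rw [one_div, Real.rpow_rpow_inv (hy i) ha.ne'] at h2
    rw [hts, one_div]
    exact h2
  have hsum : (∑ i : Fin p, y i ^ b) ≤ t ^ b := by
    have key : ∀ i : Fin p, y i ^ b ≤ y i ^ a * t ^ (b - a) := by
      intro i
      have hne : a + (b - a) ≠ 0 := by intro h; apply hb.ne'; linarith
      have h1 := Real.rpow_add' (hy i) hne
      rw [show a + (b - a) = b by ring] at h1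
      rw [h1]
      exact mul_le_mul_of_nonneg_left
        (Real.rpow_le_rpow (hy i) (hyt i) (by linarith)) (Real.rpow_nonneg (hy i) a)
    calc (∑ i : Fin p, y i ^ b) ≤ ∑ i : Fin p, y i ^ a * t ^ (b - a) :=
          Finset.sum_le_sum fun i _ => key i
      _ = S * t ^ (b - a) := by rw [hS, Finset.sum_mul]
      _ = t ^ a * t ^ (b - a) := by rw [hta]
      _ = t ^ b := by
          rw [← Real.rpow_add' ht0 (by intro h; apply hb.ne'; linarith)]
          congr 1; ring
  have := Real.rpow_le_rpow (Finset.sum_nonneg fun i _ => Real.rpow_nonneg (hy i) b)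
    hsum (by positivity : (0:ℝ) ≤ 1 / b)
  rw [one_div, Real.rpow_rpow_inv ht0 hb.ne'] at this
  simpa [one_div, hts, hS] using this

open Finset in
/-- Hölder-type comparison: for `0 < a ≤ b`, `‖y‖_a ≤ p^(1/a - 1/b) ‖y‖_b`. -/
lemma lp_norm_holder {p : ℕ} (y : Fin p → ℝ) (hy : ∀ i, 0 ≤ y i) {a b : ℝ}
    (ha : 0 < a) (hab : a ≤ b) :
    (∑ i : Fin p, y i ^ a) ^ (1 / a) ≤
      (p : ℝ) ^ (1 / a - 1 / b) * (∑ i : Fin p, y i ^ b) ^ (1 / b) := by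
  have hb : 0 < b := lt_of_lt_of_le ha hab
  have hba : 1 ≤ b / a := (one_le_div ha).mpr hab
  have key := Real.rpow_sum_le_const_mul_sum_rpow_of_nonneg (Finset.univ : Finset (Fin p))
    (f := fun i => y i ^ a) hba (fun i _ => Real.rpow_nonneg (hy i) a)
  have hterm : ∀ i : Fin p, (y i ^ a) ^ (b / a) = y i ^ b := by
    intro i
    rw [← Real.rpow_mul (hy i)]
    congr 1
    field_simp
  simp only [hterm] at key
  -- key : (∑ y^a) ^ (b/a) ≤ card ^ (b/a - 1) * ∑ y^b
  have hSa0 : 0 ≤ ∑ i : Fin p, y i ^ a :=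
    Finset.sum_nonneg fun i _ => Real.rpow_nonneg (hy i) a
  have hSb0 : 0 ≤ ∑ i : Fin p, y i ^ b :=
    Finset.sum_nonneg fun i _ => Real.rpow_nonneg (hy i) b
  have hcard0 : (0:ℝ) ≤ (Finset.univ : Finset (Fin p)).card := by positivity
  have h2 := Real.rpow_le_rpow (Real.rpow_nonneg hSa0 _) key
    (by positivity : (0:ℝ) ≤ 1 / b)
  rw [← Real.rpow_mul hSa0, Real.mul_rpow (Real.rpow_nonneg hcard0 _) hSb0,
    ← Real.rpow_mul hcard0] at h2
  have e1 : b / a * (1 / b) = 1 / a := by field_simp <;> ring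
  have e2 : (b / a - 1) * (1 / b) = 1 / a - 1 / b := by field_simp <;> ring
  rw [e1, e2] at h2
  simpa using h2

/-- Let `N` be the εq-norm.  Then for every `x ∈ ℝ^p`,
`‖x‖_2 / (p^{(1/2-1/q)₊}(p^{1/q}(1-ε)+ε)) ≤ N x ≤ p^{(1/q-1/2)₊} ‖x‖_2`. -/
theorem epsq_norm_l2_bounds (p : ℕ) (ε q : ℝ)
    (hε0 : 0 < ε) (hε1 : ε ≤ 1) (hq : 1 ≤ q)
    (N : (Fin p → ℝ) → ℝ)
    (hN0 : ∀ x : Fin p → ℝ, 0 ≤ N x)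
    (hNeq : ∀ x : Fin p → ℝ,
      ∑ i : Fin p, (max (|x i| - (1 - ε) * N x) 0) ^ q = (ε * N x) ^ q)
    (x : Fin p → ℝ) :
    l2Norm p x / ((p : ℝ) ^ (max (1 / 2 - 1 / q) 0) *
        ((p : ℝ) ^ (1 / q) * (1 - ε) + ε)) ≤ N x ∧
    N x ≤ (p : ℝ) ^ (max (1 / q - 1 / 2) 0) * l2Norm p x := by
  have hq0 : (0:ℝ) < q := lt_of_lt_of_le one_pos hq
  set v : ℝ := N x with hvdef
  have hv0 : 0 ≤ v := hN0 x
  have heq := hNeq x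
  rcases Nat.eq_zero_or_pos p with hp0 | hp
  · -- degenerate case p = 0
    subst hp0
    have hvz : v = 0 := by
      have h1 : (ε * v) ^ q = 0 := by rw [← heq]; simp
      by_contra hne
      have hpos : 0 < ε * v := mul_pos hε0 (lt_of_le_of_ne hv0 (Ne.symm hne))
      exact absurd h1 (ne_of_gt (Real.rpow_pos_of_pos hpos q))
    have hl2 : l2Norm 0 x = 0 := by simp [l2Norm]
    constructor
    · rw [hl2]; simpa using hv0
    · rw [hl2]; simp [hvz]
  · -- main case p ≥ 1
    set y : Fin p → ℝ := fun i => |x i| with hy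
    have hy0 : ∀ i, 0 ≤ y i := fun i => abs_nonneg _
    set Tq : ℝ := ∑ i : Fin p, y i ^ q with hTq
    set T2 : ℝ := ∑ i : Fin p, y i ^ (2:ℝ) with hT2
    have hTq0 : 0 ≤ Tq := Finset.sum_nonneg fun i _ => Real.rpow_nonneg (hy0 i) q
    have hT20 : 0 ≤ T2 := Finset.sum_nonneg fun i _ => Real.rpow_nonneg (hy0 i) 2
    set t : ℝ := Tq ^ (1 / q) with ht
    have ht0 : 0 ≤ t := Real.rpow_nonneg hTq0 _
    have hl2 : l2Norm p x = T2 ^ (1/2 : ℝ) := by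
      rw [l2Norm, Real.sqrt_eq_rpow, hT2]
      congr 1
      refine Finset.sum_congr rfl fun i _ => ?_
      rw [hy, Real.rpow_two, sq_abs]
    -- each coordinate bounded by t
    have hyt : ∀ i, y i ≤ t := by
      intro i
      have h1 : y i ^ q ≤ Tq :=
        Finset.single_le_sum (fun j _ => Real.rpow_nonneg (hy0 j) q) (Finset.mem_univ i)
      have h2 : (y i ^ q) ^ (1 / q) ≤ Tq ^ (1 / q) :=
        Real.rpow_le_rpow (Real.rpow_nonneg (hy0 i) q) h1 (by positivity)
      rw [one_div, Real.rpow_rpow_inv (hy0 i) hq0.ne'] at h2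
      rw [ht, one_div]
      exact h2
    -- Step A : v ≤ t
    have hvt : v ≤ t := by
      by_contra h
      push_neg at h  -- t < v
      have hkey : ∀ i : Fin p, max (|x i| - (1 - ε) * v) 0 ≤ ε * y i := by
        intro i
        have h1 : |x i| ≤ v := le_of_lt (lt_of_le_of_lt (hyt i) h)
        have h2 : |x i| - (1 - ε) * v ≤ ε * |x i| := by nlinarith [abs_nonneg (x i)]
        exact max_le (h2.trans (le_refl _)) (by positivity)
      have hsum : (ε * v) ^ q ≤ ε ^ q * Tq := by
        rw [← heq]
        calc (∑ i : Fin p, (max (|x i| - (1 - ε) * v) 0) ^ q)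
            ≤ ∑ i : Fin p, (ε * y i) ^ q :=
              Finset.sum_le_sum fun i _ =>
                Real.rpow_le_rpow (le_max_right _ _) (hkey i) hq0.le
          _ = ε ^ q * Tq := by
              rw [hTq, Finset.mul_sum]
              exact Finset.sum_congr rfl fun i _ => Real.mul_rpow hε0.le (hy0 i)
      have htq : t ^ q = Tq := by rw [ht, one_div, Real.rpow_inv_rpow hTq0 hq0.ne']
      have hsum2 : (ε * v) ^ q ≤ (ε * t) ^ q := by
        rwa [Real.mul_rpow hε0.le ht0, htq]
      have h3 : ε * v ≤ ε * t :=
        (Real.rpow_le_rpow_iff (by positivity) (by positivity) hq0).mp hsum2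
      have : v ≤ t := le_of_mul_le_mul_left h3 hε0
      exact absurd this (not_le.mpr h)
    -- Step B (Minkowski) : t ≤ (p^(1/q)(1-ε)+ε) * v
    set D : ℝ := (p : ℝ) ^ (1/q) * (1 - ε) + ε with hD
    have hp1 : (1:ℝ) ≤ (p:ℝ) := by exact_mod_cast hp
    have hD0 : 0 < D := by
      rw [hD]
      have h1 : (0:ℝ) ≤ (p : ℝ) ^ ((1:ℝ)/q) * (1 - ε) :=
        mul_nonneg (Real.rpow_nonneg (by positivity) _) (by linarith)
      linarith
    have htD : t ≤ D * v := by
      set f : Fin p → ℝ := fun i => max (|x i| - (1 - ε) * v) 0 with hf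
      set g : Fin p → ℝ := fun i => (1 - ε) * v with hg
      have hf0 : ∀ i ∈ Finset.univ, 0 ≤ f i := fun i _ => le_max_right _ _
      have hg0 : ∀ i ∈ (Finset.univ : Finset (Fin p)), 0 ≤ g i := fun i _ => by
        have : (0:ℝ) ≤ (1 - ε) * v := mul_nonneg (by linarith) hv0
        simpa [hg] using this
      have hminW := Real.Lp_add_le_of_nonneg (Finset.univ : Finset (Fin p))
        (f := f) (g := g) hq hf0 hg0
      have hTq_le : Tq ≤ ∑ i : Fin p, (f i + g i) ^ q := by
        refine Finset.sum_le_sum fun i _ => ?_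
        refine Real.rpow_le_rpow (hy0 i) ?_ hq0.le
        have : |x i| - (1 - ε) * v ≤ f i := le_max_left _ _
        simp only [hy, hf, hg]
        linarith [le_max_left (|x i| - (1 - ε) * v) 0]
      have h1 : t ≤ (∑ i : Fin p, (f i + g i) ^ q) ^ (1 / q) := by
        rw [ht]
        exact Real.rpow_le_rpow hTq0 hTq_le (by positivity)
      have hfq : (∑ i : Fin p, f i ^ q) ^ (1 / q) = ε * v := by
        rw [show (∑ i : Fin p, f i ^ q) = (ε * v) ^ q from heq, one_div,
          Real.rpow_rpow_inv (by positivity) hq0.ne']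
      have hgq : (∑ i : Fin p, g i ^ q) ^ (1 / q) = (p : ℝ) ^ (1/q) * ((1 - ε) * v) := by
        have hc0 : (0:ℝ) ≤ (1 - ε) * v := mul_nonneg (by linarith) hv0
        have : (∑ i : Fin p, g i ^ q) = (p : ℝ) * ((1 - ε) * v) ^ q := by
          simp [hg, Finset.sum_const, mul_comm]
        rw [this, Real.mul_rpow (by positivity) (Real.rpow_nonneg hc0 _), one_div,
          Real.rpow_rpow_inv hc0 hq0.ne']
      calc t ≤ (∑ i : Fin p, (f i + g i) ^ q) ^ (1 / q) := h1
        _ ≤ (∑ i : Fin p, f i ^ q) ^ (1 / q) + (∑ i : Fin p, g i ^ q) ^ (1 / q) := hminW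
        _ = ε * v + (p : ℝ) ^ (1/q) * ((1 - ε) * v) := by rw [hfq, hgq]
        _ = D * v := by rw [hD]; ring
    -- now case split on q vs 2
    rcases le_or_gt q 2 with hq2 | hq2
    · -- q ≤ 2
      have hiq : (1:ℝ)/2 ≤ 1/q := by
        apply one_div_le_one_div_of_le hq0 hq2
      have hmax1 : max (1/q - 1/2) 0 = 1/q - 1/2 := max_eq_left (by linarith)
      have hmax2 : max ((1:ℝ)/2 - 1/q) 0 = 0 := max_eq_right (by linarith)
      constructor
      · -- lower bound
        rw [hmax2, Real.rpow_zero, one_mul, div_le_iff₀ hD0, hl2]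
        have h1 : T2 ^ (1/2:ℝ) ≤ t := by
          rw [ht, hTq, hT2]
          exact lp_norm_anti y hy0 hq0 hq2
        calc T2 ^ (1/2:ℝ) ≤ t := h1
          _ ≤ D * v := htD
          _ = v * D := mul_comm _ _
      · -- upper bound
        rw [hmax1, hl2]
        have h2 : t ≤ (p:ℝ) ^ (1/q - 1/2) * T2 ^ (1/2:ℝ) := by
          rw [ht, hTq, hT2]
          exact lp_norm_holder y hy0 hq0 hq2
        exact hvt.trans h2
    · -- 2 < q
      have hiq : (1:ℝ)/q ≤ 1/2 := by
        apply one_div_le_one_div_of_le (by norm_num) hq2.le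
      have hmax1 : max (1/q - 1/2) 0 = 0 := max_eq_right (by linarith)
      have hmax2 : max ((1:ℝ)/2 - 1/q) 0 = 1/2 - 1/q := max_eq_left (by linarith)
      have two_pos : (0:ℝ) < 2 := by norm_num
      constructor
      · -- lower bound
        have hpm0 : (0:ℝ) < (p:ℝ) ^ ((1:ℝ)/2 - 1/q) :=
          Real.rpow_pos_of_pos (by positivity) _
        rw [hmax2, div_le_iff₀ (by positivity), hl2]
        have h1 : T2 ^ (1/2:ℝ) ≤ (p:ℝ) ^ ((1:ℝ)/2 - 1/q) * t := by
          rw [ht, hTq, hT2]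
          exact lp_norm_holder y hy0 two_pos hq2.le
        calc T2 ^ (1/2:ℝ) ≤ (p:ℝ) ^ ((1:ℝ)/2 - 1/q) * t := h1
          _ ≤ (p:ℝ) ^ ((1:ℝ)/2 - 1/q) * (D * v) :=
              mul_le_mul_of_nonneg_left htD hpm0.le
          _ = v * ((p:ℝ) ^ ((1:ℝ)/2 - 1/q) * D) := by ring
      · -- upper bound
        rw [hmax1, Real.rpow_zero, one_mul, hl2]
        have h2 : t ≤ T2 ^ (1/2:ℝ) := by
          rw [ht, hTq, hT2]
          exact lp_norm_anti y hy0 two_pos hq2.le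
        exact hvt.trans h2
end

section
/- For every ε ∈ (0,1], q ∈ [1,∞), and x ∈ ℝ^p, the εq-norm satisfies ‖x‖_1 / (p^{1 − 1/q}(p^{1/q}(1−ε) + ε)) ≤ ‖x‖_{εq} ≤ ‖x‖_1, where ‖x‖_1 = ∑_{i=1}^p |x_i|. -/
/-!
Write `v = ‖x‖_{εq}` and `a_i = (|x_i| - (1-ε)v)_+`, so that `‖a‖_q = εv`.
If `v > ‖x‖_1` then `a_i ≤ ε|x_i|` for every `i`, and superadditivity of `t ↦ t^q` gives
`(εv)^q = ∑ a_i^q ≤ (ε‖x‖_1)^q`, a contradiction. Conversely `‖x‖_1 - p(1-ε)v ≤ ∑ a_i`, and the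
power mean inequality bounds `∑ a_i ≤ p^{1-1/q} ‖a‖_q = p^{1-1/q} εv`.
-/

/-- The ℓ_1 norm on `ℝ^p`. -/
noncomputable def l1Norm (p : ℕ) (x : Fin p → ℝ) : ℝ :=
  ∑ i : Fin p, |x i|

open Finset

theorem Real.sum_rpow_le_rpow_sum {ι : Type*} (s : Finset ι) {f : ι → ℝ} {q : ℝ}
    (hf : ∀ i ∈ s, 0 ≤ f i) (hq : 1 ≤ q) :
    ∑ i ∈ s, f i ^ q ≤ (∑ i ∈ s, f i) ^ q := by
  classical
  induction s using Finset.induction_on with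
  | empty => simp [Real.zero_rpow (by positivity : q ≠ 0)]
  | insert j s hj ih =>
    rw [sum_insert hj, sum_insert hj]
    have hs : ∀ i ∈ s, 0 ≤ f i := fun i hi => hf i (mem_insert_of_mem hi)
    calc f j ^ q + ∑ i ∈ s, f i ^ q ≤ f j ^ q + (∑ i ∈ s, f i) ^ q := by gcongr; exact ih hs
      _ ≤ (f j + ∑ i ∈ s, f i) ^ q :=
        Real.add_rpow_le_rpow_add (hf j (mem_insert_self j s)) (sum_nonneg hs) hq

theorem Real.sum_le_card_rpow_mul_rpow_sum_rpow {ι : Type*} (s : Finset ι) {f : ι → ℝ} {q : ℝ}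
    (hf : ∀ i ∈ s, 0 ≤ f i) (hq : 1 ≤ q) :
    ∑ i ∈ s, f i ≤ (#s : ℝ) ^ (1 - 1 / q) * (∑ i ∈ s, f i ^ q) ^ (1 / q) := by
  have hq0 : 0 < q := zero_lt_one.trans_le hq
  have hB : 0 ≤ ∑ i ∈ s, f i ^ q := sum_nonneg fun i hi => Real.rpow_nonneg (hf i hi) q
  have hn : (0 : ℝ) ≤ #s := Nat.cast_nonneg _
  rw [← Real.rpow_le_rpow_iff (sum_nonneg hf) (by positivity) hq0,
    Real.mul_rpow (by positivity) (by positivity), ← Real.rpow_mul hn, ← Real.rpow_mul hB,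
    one_div_mul_cancel hq0.ne', Real.rpow_one, sub_mul, one_div_mul_cancel hq0.ne', one_mul]
  exact Real.rpow_sum_le_const_mul_sum_rpow_of_nonneg s hq hf

section EpsqEquation

variable {p : ℕ} {ε q v : ℝ} {x : Fin p → ℝ}

theorem le_l1Norm_of_epsq_eq (hε0 : 0 < ε) (hε1 : ε ≤ 1) (hq : 1 ≤ q)
    (h : ∑ i, (max (|x i| - (1 - ε) * v) 0) ^ q = (ε * v) ^ q) :
    v ≤ l1Norm p x := by
  by_contra! hlt
  have hS : 0 ≤ l1Norm p x := sum_nonneg fun i _ => abs_nonneg (x i)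
  have hle : ∀ i, max (|x i| - (1 - ε) * v) 0 ≤ ε * |x i| := fun i => by
    have hxi : |x i| ≤ l1Norm p x :=
      single_le_sum (f := fun i => |x i|) (fun j _ => abs_nonneg (x j)) (mem_univ i)
    exact max_le (by nlinarith [abs_nonneg (x i)]) (by positivity)
  refine lt_irrefl ((ε * v) ^ q) ?_
  calc (ε * v) ^ q = ∑ i, (max (|x i| - (1 - ε) * v) 0) ^ q := h.symm
    _ ≤ ∑ i, (ε * |x i|) ^ q :=
      sum_le_sum fun i _ => Real.rpow_le_rpow (le_max_right _ _) (hle i) (by linarith)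
    _ ≤ (∑ i, ε * |x i|) ^ q := Real.sum_rpow_le_rpow_sum _ (fun i _ => by positivity) hq
    _ = (ε * l1Norm p x) ^ q := by rw [← mul_sum, l1Norm]
    _ < (ε * v) ^ q := by gcongr

theorem l1Norm_le_mul_of_epsq_eq (hε0 : 0 ≤ ε) (hq : 1 ≤ q) (hv : 0 ≤ v)
    (h : ∑ i, (max (|x i| - (1 - ε) * v) 0) ^ q = (ε * v) ^ q) :
    l1Norm p x ≤ v * ((p : ℝ) ^ (1 - 1 / q) * ((p : ℝ) ^ (1 / q) * (1 - ε) + ε)) := by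
  have hq0 : q ≠ 0 := (zero_lt_one.trans_le hq).ne'
  have hmean : ∑ i, max (|x i| - (1 - ε) * v) 0 ≤ (p : ℝ) ^ (1 - 1 / q) * (ε * v) := by
    have := Real.sum_le_card_rpow_mul_rpow_sum_rpow univ
      (f := fun i => max (|x i| - (1 - ε) * v) 0) (fun i _ => le_max_right _ _) hq
    rwa [h, one_div q, Real.rpow_rpow_inv (by positivity) hq0, card_univ, Fintype.card_fin,
      ← one_div] at this
  have hdrop : l1Norm p x - p * ((1 - ε) * v) ≤ ∑ i, max (|x i| - (1 - ε) * v) 0 := by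
    have := sum_le_sum fun i (_ : i ∈ univ) => le_max_left (|x i| - (1 - ε) * v) 0
    rwa [sum_sub_distrib, sum_const, card_univ, Fintype.card_fin, nsmul_eq_mul] at this
  have hsplit : (p : ℝ) ^ (1 - 1 / q) * (p : ℝ) ^ (1 / q) = p := by
    rw [← Real.rpow_add' (Nat.cast_nonneg p) (by rw [sub_add_cancel]; exact one_ne_zero),
      sub_add_cancel, Real.rpow_one]
  linear_combination hdrop + hmean + (-(1 - ε) * v) * hsplit

end EpsqEquation

/-- Let `N` be the εq-norm.  Then for every `x ∈ ℝ^p`,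
`‖x‖_1 / (p^{1-1/q}(p^{1/q}(1-ε)+ε)) ≤ N x ≤ ‖x‖_1`. -/
theorem epsq_norm_l1_bounds (p : ℕ) (ε q : ℝ)
    (hε0 : 0 < ε) (hε1 : ε ≤ 1) (hq : 1 ≤ q)
    (N : (Fin p → ℝ) → ℝ)
    (hN0 : ∀ x : Fin p → ℝ, 0 ≤ N x)
    (hNeq : ∀ x : Fin p → ℝ,
      ∑ i : Fin p, (max (|x i| - (1 - ε) * N x) 0) ^ q = (ε * N x) ^ q)
    (x : Fin p → ℝ) :
    l1Norm p x / ((p : ℝ) ^ (1 - 1 / q) * ((p : ℝ) ^ (1 / q) * (1 - ε) + ε)) ≤ N x ∧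
    N x ≤ l1Norm p x := by
  have hden : 0 ≤ (p : ℝ) ^ (1 - 1 / q) * ((p : ℝ) ^ (1 / q) * (1 - ε) + ε) := by
    have := sub_nonneg.2 hε1
    positivity
  exact ⟨div_le_of_le_mul₀ hden (hN0 x) (l1Norm_le_mul_of_epsq_eq hε0.le hq (hN0 x) (hNeq x)),
    le_l1Norm_of_epsq_eq hε0 hε1 hq (hNeq x)⟩
end

section
/- Fix ε ∈ (0,1] and q ∈ [1,∞), and for x ∈ ℝ^p define u ∈ ℝ^p by u_i = sgn(x_i)(|x_i| − (1−ε)‖x‖_{εq})_+ and w = x − u. Then x = u + w with ‖u‖_q = ε‖x‖_{εq} and ‖w‖_∞ = (1−ε)‖x‖_{εq}. -/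
/-- The supremum (ℓ_∞) norm on `ℝ^p`. -/
noncomputable def linfNorm (p : ℕ) (x : Fin p → ℝ) : ℝ :=
  ⨆ i : Fin p, |x i|

/-- **ε-decomposition, existence.**  Let `N` be the εq-norm and, given
`x ∈ ℝ^p`, set `u i = sgn (x i) * (|x i| - (1-ε) N x)₊` and `w = x - u`.  Then
`x = u + w`, `‖u‖_q = ε N x`, and `‖w‖_∞ = (1-ε) N x`. -/
theorem epsq_norm_decomposition (p : ℕ) (ε q : ℝ)
    (hε0 : 0 < ε) (hε1 : ε ≤ 1) (hq : 1 ≤ q)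
    (N : (Fin p → ℝ) → ℝ)
    (hN0 : ∀ x : Fin p → ℝ, 0 ≤ N x)
    (hNeq : ∀ x : Fin p → ℝ,
      ∑ i : Fin p, (max (|x i| - (1 - ε) * N x) 0) ^ q = (ε * N x) ^ q)
    (x : Fin p → ℝ)
    (u : Fin p → ℝ)
    (hu : u = fun i => Real.sign (x i) * max (|x i| - (1 - ε) * N x) 0)
    (w : Fin p → ℝ) (hw : w = x - u) :
    x = u + w ∧ lqNorm p q u = ε * N x ∧ linfNorm p w = (1 - ε) * N x := by
  have hqpos : 0 < q := lt_of_lt_of_le one_pos hq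
  set c := (1 - ε) * N x with hc
  have hc0 : 0 ≤ c := mul_nonneg (by linarith) (hN0 x)
  have hεN0 : 0 ≤ ε * N x := mul_nonneg hε0.le (hN0 x)
  have habs : ∀ i, |u i| = max (|x i| - c) 0 := by
    intro i
    simp only [hu]
    rcases lt_trichotomy (x i) 0 with h | h | h
    · rw [Real.sign_of_neg h, abs_mul, abs_neg, abs_one, one_mul,
        abs_of_nonneg (le_max_right _ _)]
    · rw [h, Real.sign_zero, zero_mul, abs_zero, zero_sub, eq_comm,
        max_eq_right (by linarith)]
    · rw [Real.sign_of_pos h, one_mul, abs_of_nonneg (le_max_right _ _)]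
  have hwabs : ∀ i, |w i| = min (|x i|) c := by
    intro i
    simp only [hw, hu]
    simp only [Pi.sub_apply]
    rcases le_or_gt (|x i|) c with h | h
    · rw [max_eq_right (by linarith), mul_zero, sub_zero, min_eq_left h]
    · have hx0 : x i ≠ 0 := by
        intro h0; rw [h0, abs_zero] at h; linarith
      rw [max_eq_left (by linarith), min_eq_right h.le]
      rcases hx0.lt_or_gt with hn | hp
      · rw [Real.sign_of_neg hn, abs_of_neg hn]
        have : x i - -1 * (-x i - c) = -c := by ring
        rw [this, abs_neg, abs_of_nonneg hc0]
      · rw [Real.sign_of_pos hp, abs_of_pos hp, one_mul]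
        have : x i - (x i - c) = c := by ring
        rw [this, abs_of_nonneg hc0]
  refine ⟨by rw [hw]; abel, ?_, ?_⟩
  · unfold lqNorm
    have : ∑ i : Fin p, |u i| ^ q = (ε * N x) ^ q := by
      rw [← hNeq x]
      exact Finset.sum_congr rfl fun i _ => by rw [habs i]
    rw [this, one_div, Real.rpow_rpow_inv hεN0 hqpos.ne']
  · unfold linfNorm
    rcases (hN0 x).eq_or_lt with hN | hN
    · have hcz : c = 0 := by rw [hc, ← hN, mul_zero]
      have : ∀ i, |w i| = 0 := fun i => by
        rw [hwabs i, hcz, min_eq_right (abs_nonneg _)]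
      simp only [this, ← hN, mul_zero, ← hcz]
      rcases isEmpty_or_nonempty (Fin p) with hE | hE
      · rw [Real.iSup_of_isEmpty, hcz]
      · rw [ciSup_const, hcz]
    · -- N x > 0 : some coordinate exceeds c
      have hsum : 0 < ∑ i : Fin p, (max (|x i| - c) 0) ^ q := by
        rw [hNeq x]
        exact Real.rpow_pos_of_pos (mul_pos hε0 hN) q
      have hex : ∃ i, c < |x i| := by
        by_contra hco
        push_neg at hco
        have : ∀ i : Fin p, (max (|x i| - c) 0) ^ q = 0 := fun i => by
          rw [max_eq_right (by linarith [hco i]), Real.zero_rpow hqpos.ne']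
        rw [Finset.sum_congr rfl fun i _ => this i, Finset.sum_const,
          smul_zero] at hsum
        exact lt_irrefl 0 hsum
      obtain ⟨i₀, hi₀⟩ := hex
      have hne : Nonempty (Fin p) := ⟨i₀⟩
      refine le_antisymm (ciSup_le fun i => ?_) ?_
      · rw [hwabs i]; exact min_le_right _ _
      · refine le_ciSup_of_le (Set.Finite.bddAbove (Set.finite_range _)) i₀ ?_
        rw [hwabs i₀, min_eq_right hi₀.le]
end

section
/- Fix ε ∈ (0,1] and q ∈ [1,∞). For every x ∈ ℝ^p, the decomposition x = u + w with u, w ∈ ℝ^p, ‖u‖_q = ε‖x‖_{εq}, and ‖w‖_∞ = (1−ε)‖x‖_{εq} is unique: if (u,w) and (u',w') are two such decompositions then u = u' and w = w'. -/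
/-- **ε-decomposition, uniqueness.**  Let `N` be the εq-norm.  For every
`x ∈ ℝ^p`, the decomposition `x = u + w` with `‖u‖_q = ε N x` and
`‖w‖_∞ = (1-ε) N x` is unique. -/
theorem epsq_norm_decomposition_unique (p : ℕ) (ε q : ℝ)
    (hε0 : 0 < ε) (hε1 : ε ≤ 1) (hq : 1 ≤ q)
    (N : (Fin p → ℝ) → ℝ)
    (hN0 : ∀ x : Fin p → ℝ, 0 ≤ N x)
    (hNeq : ∀ x : Fin p → ℝ,
      ∑ i : Fin p, (max (|x i| - (1 - ε) * N x) 0) ^ q = (ε * N x) ^ q)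
    (x u w u' w' : Fin p → ℝ)
    (hdec : x = u + w) (huq : lqNorm p q u = ε * N x)
    (hwinf : linfNorm p w = (1 - ε) * N x)
    (hdec' : x = u' + w') (huq' : lqNorm p q u' = ε * N x)
    (hwinf' : linfNorm p w' = (1 - ε) * N x) :
    u = u' ∧ w = w' := by
  have hq0 : 0 < q := lt_of_lt_of_le one_pos hq
  set c : ℝ := (1 - ε) * N x with hc
  have hc0 : 0 ≤ c := mul_nonneg (by linarith) (hN0 x)
  have key : ∀ (u w : Fin p → ℝ), x = u + w → lqNorm p q u = ε * N x →
      linfNorm p w = c → ∀ i,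
      u i = if 0 ≤ x i then max (|x i| - c) 0 else -(max (|x i| - c) 0) := by
    intro u w hdec huq hwinf i
    have hxw : ∀ j, x j = u j + w j := fun j => congrFun hdec j
    have hwle : ∀ j, |w j| ≤ c := by
      intro j
      rw [← hwinf]
      unfold linfNorm
      exact le_ciSup (f := fun j : Fin p => |w j|)
        (Set.Finite.bddAbove (Set.finite_range _)) j
    have hmle : ∀ j, max (|x j| - c) 0 ≤ |u j| := by
      intro j
      refine max_le ?_ (abs_nonneg _)
      have h1 : |x j| ≤ |u j| + |w j| := by rw [hxw j]; exact abs_add_le _ _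
      have := hwle j
      linarith
    have hsum_u : ∑ j, |u j| ^ q = (ε * N x) ^ q := by
      have hs : 0 ≤ ∑ j : Fin p, |u j| ^ q :=
        Finset.sum_nonneg fun j _ => Real.rpow_nonneg (abs_nonneg _) q
      have h := huq
      unfold lqNorm at h
      calc ∑ j : Fin p, |u j| ^ q
          = ((∑ j : Fin p, |u j| ^ q) ^ (1/q)) ^ q := by
            rw [one_div, Real.rpow_inv_rpow hs (ne_of_gt hq0)]
        _ = (ε * N x) ^ q := by rw [h]
    have hsum_eq : ∑ j : Fin p, (max (|x j| - c) 0) ^ q = ∑ j : Fin p, |u j| ^ q := by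
      rw [hsum_u]; exact hNeq x
    have heq : ∀ j : Fin p, (max (|x j| - c) 0) ^ q = |u j| ^ q := by
      intro j
      have hle : ∀ j ∈ Finset.univ, (max (|x j| - c) 0) ^ q ≤ |u j| ^ q :=
        fun j _ => Real.rpow_le_rpow (le_max_right _ _) (hmle j) hq0.le
      exact (Finset.sum_eq_sum_iff_of_le hle).mp hsum_eq j (Finset.mem_univ j)
    have habs : ∀ j, |u j| = max (|x j| - c) 0 := by
      intro j
      by_contra hne
      have hlt : max (|x j| - c) 0 < |u j| :=
        lt_of_le_of_ne (hmle j) (fun h => hne h.symm)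
      exact absurd (heq j) (ne_of_lt (Real.rpow_lt_rpow (le_max_right _ _) hlt hq0))
    by_cases hm : |x i| - c ≤ 0
    · have h0 : max (|x i| - c) 0 = 0 := max_eq_right hm
      have hu0 : u i = 0 := abs_eq_zero.mp (by rw [habs i, h0])
      rw [h0, hu0]
      by_cases hx : 0 ≤ x i <;> simp [hx]
    · push_neg at hm
      have hmax : max (|x i| - c) 0 = |x i| - c := max_eq_left hm.le
      have hxabs : c < |x i| := by linarith
      have hwi := hwle i
      rcases le_or_gt 0 (x i) with hx | hx
      · have hxpos : 0 < x i := by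
          rw [abs_of_nonneg hx] at hxabs; linarith
        have hupos : 0 < u i := by
          by_contra hle; push_neg at hle
          have h1 : x i ≤ w i := by have := hxw i; linarith
          have h2 : x i ≤ |w i| := le_trans h1 (le_abs_self _)
          rw [abs_of_nonneg hx] at hxabs; linarith
        have : u i = max (|x i| - c) 0 := by
          rw [← habs i, abs_of_pos hupos]
        simp [hx, this]
      · have huneg : u i < 0 := by
          by_contra hle; push_neg at hle
          have h1 : w i ≤ x i := by have := hxw i; linarith
          have h2 : -x i ≤ |w i| := le_trans (by linarith [neg_le_neg h1]) (neg_le_abs _)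
          rw [abs_of_neg hx] at hxabs; linarith
        have : u i = -(max (|x i| - c) 0) := by
          rw [← habs i, abs_of_neg huneg, neg_neg]
        simp [not_le.mpr hx, this]
  have hu : u = u' := funext fun i =>
    (key u w hdec huq hwinf i).trans (key u' w' hdec' huq' hwinf' i).symm
  refine ⟨hu, funext fun i => ?_⟩
  have h1 := congrFun hdec i
  have h2 := congrFun hdec' i
  have h3 := congrFun hu i
  simp only [Pi.add_apply] at h1 h2
  linarith
end

section
/- Fix ε ∈ (0,1], q ∈ [1,∞), and ν ≥ 0. Then the closed εq-ball of radius ν is the Minkowski sum of an ℓ_q-ball and an ℓ_∞-ball: {x ∈ ℝ^p : ‖x‖_{εq} ≤ ν} = {u + w : u, w ∈ ℝ^p, ‖u‖_q ≤ εν, ‖w‖_∞ ≤ (1−ε)ν}. -/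
/-- Let `N` be the εq-norm and `ν ≥ 0`.  The closed εq-ball of radius
`ν` is the Minkowski sum of the ℓ_q-ball of radius `εν` and the ℓ_∞-ball of radius
`(1-ε)ν`. -/
theorem epsq_ball_minkowski (p : ℕ) (ε q : ℝ)
    (hε0 : 0 < ε) (hε1 : ε ≤ 1) (hq : 1 ≤ q)
    (N : (Fin p → ℝ) → ℝ)
    (hN0 : ∀ x : Fin p → ℝ, 0 ≤ N x)
    (hNeq : ∀ x : Fin p → ℝ,
      ∑ i : Fin p, (max (|x i| - (1 - ε) * N x) 0) ^ q = (ε * N x) ^ q)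
    (ν : ℝ) (hν : 0 ≤ ν) :
    {x : Fin p → ℝ | N x ≤ ν} =
      {z : Fin p → ℝ | ∃ u w : Fin p → ℝ,
        z = u + w ∧ lqNorm p q u ≤ ε * ν ∧ linfNorm p w ≤ (1 - ε) * ν} := by
  have hq0 : (0:ℝ) < q := lt_of_lt_of_le one_pos hq
  have hqne : q ≠ 0 := ne_of_gt hq0
  ext x
  simp only [Set.mem_setOf_eq]
  constructor
  · intro hx
    set c := (1 - ε) * N x with hc
    have hc0 : 0 ≤ c := mul_nonneg (by linarith) (hN0 x)
    have hcν : c ≤ (1 - ε) * ν := mul_le_mul_of_nonneg_left hx (by linarith)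
    refine ⟨fun i => Real.sign (x i) * max (|x i| - c) 0,
            fun i => x i - Real.sign (x i) * max (|x i| - c) 0, ?_, ?_, ?_⟩
    · funext i; simp
    · -- lq norm bound
      have habs : ∀ i, |Real.sign (x i) * max (|x i| - c) 0| = max (|x i| - c) 0 := by
        intro i
        rcases lt_trichotomy (x i) 0 with h | h | h
        · rw [Real.sign_of_neg h]
          rw [abs_mul, abs_of_nonneg (le_max_right (|x i| - c) 0)]
          norm_num
        · rw [h]
          simp [max_eq_right (by linarith : (0:ℝ) - c ≤ 0), hc0]
        · rw [Real.sign_of_pos h]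
          rw [abs_mul, abs_of_nonneg (le_max_right (|x i| - c) 0)]
          norm_num
      have hεN : 0 ≤ ε * N x := mul_nonneg hε0.le (hN0 x)
      have hsum : ∑ i : Fin p, |Real.sign (x i) * max (|x i| - c) 0| ^ q
          = (ε * N x) ^ q := by
        rw [Finset.sum_congr rfl (fun i _ => by rw [habs i])]
        exact hNeq x
      unfold lqNorm
      rw [hsum, ← Real.rpow_mul hεN, mul_one_div, div_self hqne, Real.rpow_one]
      exact mul_le_mul_of_nonneg_left hx hε0.le
    · -- linf bound
      have hbound : ∀ i, |x i - Real.sign (x i) * max (|x i| - c) 0| ≤ c := by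
        intro i
        rcases le_or_gt (|x i|) c with h | h
        · rw [max_eq_right (by linarith : |x i| - c ≤ 0)]
          simpa using h
        · rw [max_eq_left (by linarith : (0:ℝ) ≤ |x i| - c)]
          have hx0 : x i ≠ 0 := by
            intro h0
            rw [h0] at h
            simp at h
            linarith
          rcases hx0.lt_or_gt with hneg | hpos
          · rw [Real.sign_of_neg hneg, abs_of_neg hneg]
            have : x i - -1 * (-x i - c) = -c := by ring
            rw [this, abs_neg, abs_of_nonneg hc0]
          · rw [Real.sign_of_pos hpos, abs_of_pos hpos]
            have : x i - 1 * (x i - c) = c := by ring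
            rw [this, abs_of_nonneg hc0]
      unfold linfNorm
      exact Real.iSup_le (fun i => (hbound i).trans hcν)
        (mul_nonneg (by linarith) hν)
  · rintro ⟨u, w, rfl, hu, hw⟩
    by_contra hcon
    push_neg at hcon
    set z := u + w with hz
    have h1 : ∀ i : Fin p, max (|z i| - (1 - ε) * N z) 0 ≤ |u i| := by
      intro i
      apply max_le _ (abs_nonneg _)
      have hwi : |w i| ≤ (1 - ε) * ν := by
        simp only [linfNorm] at hw
        exact le_trans (le_ciSup (f := fun j => |w j|) (Set.Finite.bddAbove (Set.finite_range _)) i) hw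
      have hzi : |z i| ≤ |u i| + |w i| := abs_add_le _ _
      have hνN : (1 - ε) * ν ≤ (1 - ε) * N z :=
        mul_le_mul_of_nonneg_left hcon.le (by linarith)
      linarith
    have h2 : ∑ i : Fin p, max (|z i| - (1 - ε) * N z) 0 ^ q
        ≤ ∑ i : Fin p, |u i| ^ q :=
      Finset.sum_le_sum fun i _ =>
        Real.rpow_le_rpow (le_max_right _ _) (h1 i) hq0.le
    have hS0 : 0 ≤ ∑ i : Fin p, |u i| ^ q :=
      Finset.sum_nonneg fun i _ => Real.rpow_nonneg (abs_nonneg _) _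
    have h3 : ∑ i : Fin p, |u i| ^ q ≤ (ε * ν) ^ q := by
      have := Real.rpow_le_rpow (Real.rpow_nonneg hS0 _) hu hq0.le
      rwa [← Real.rpow_mul hS0, one_div, inv_mul_cancel₀ hqne, Real.rpow_one] at this
    have h4 : (ε * ν) ^ q < (ε * N z) ^ q :=
      Real.rpow_lt_rpow (mul_nonneg hε0.le hν)
        (mul_lt_mul_of_pos_left hcon hε0) hq0
    rw [hNeq z] at h2
    linarith
end

section
/- Fix ε ∈ (0,1] and q ∈ (1,∞). For every y ∈ ℝ^p, the dual norm of the εq-norm satisfies ‖y‖_{εq}^* := sup{⟨y,x⟩ : x ∈ ℝ^p, ‖x‖_{εq} ≤ 1} = ε‖y‖_{q/(q−1)} + (1−ε)‖y‖_1; and for q = 1, ‖y‖_{ε1}^* = ε‖y‖_∞ + (1−ε)‖y‖_1. -/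
/-!
Write `v = N x` and `w i = (|x i| - (1 - ε) v)₊`. The defining equation says `‖w‖_q = ε v`, and
`|x i| ≤ w i + (1 - ε) v`, so Hölder gives `⟨y, x⟩ ≤ v (ε ‖y‖_* + (1 - ε) ‖y‖_1)`, where `‖·‖_*`
is the dual of `ℓ_q` (that is `ℓ_{q/(q-1)}`, or `ℓ_∞` when `q = 1`). Conversely, if `u ≥ 0` has
`‖u‖_q ≤ 1` and `⟨|y|, u⟩ = ‖y‖_*`, the point `x i = sign (y i) ((1 - ε) + ε u i)` has `N x ≤ 1`,
because the defining sum decreases in `v`, and it attains the bound.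
-/

open Finset

section EpsqNorm

variable {p : ℕ} {ε r : ℝ} {N : (Fin p → ℝ) → ℝ}

lemma epsq_le_one_of_abs_le (hε0 : 0 < ε) (hε1 : ε ≤ 1) (hr : 0 < r)
    (hNeq : ∀ x : Fin p → ℝ,
      ∑ i : Fin p, (max (|x i| - (1 - ε) * N x) 0) ^ r = (ε * N x) ^ r)
    {x u : Fin p → ℝ} (hu : 0 ≤ u) (hu1 : ∑ i, u i ^ r ≤ 1)
    (hx : ∀ i, |x i| ≤ (1 - ε) + ε * u i) : N x ≤ 1 := by
  by_contra! hN
  have hshift : 1 - ε ≤ (1 - ε) * N x := le_mul_of_one_le_right (by linarith) hN.le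
  have hterm (i : Fin p) : max (|x i| - (1 - ε) * N x) 0 ≤ ε * u i :=
    max_le (by linarith [hx i]) (mul_nonneg hε0.le (hu i))
  have hle : (ε * N x) ^ r ≤ ε ^ r := calc
    (ε * N x) ^ r = ∑ i, (max (|x i| - (1 - ε) * N x) 0) ^ r := (hNeq x).symm
    _ ≤ ∑ i, (ε * u i) ^ r :=
      sum_le_sum fun i _ => Real.rpow_le_rpow (le_max_right _ _) (hterm i) hr.le
    _ = ε ^ r * ∑ i, u i ^ r := by simp_rw [Real.mul_rpow hε0.le (hu _), mul_sum]
    _ ≤ ε ^ r := mul_le_of_le_one_right (by positivity) hu1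
  exact hle.not_gt (Real.rpow_lt_rpow hε0.le (lt_mul_of_one_lt_right hε0 hN) hr)

lemma sum_mul_le_epsq_mul (hε0 : 0 ≤ ε) (hr : r ≠ 0) (hN0 : ∀ x : Fin p → ℝ, 0 ≤ N x)
    (hNeq : ∀ x : Fin p → ℝ,
      ∑ i : Fin p, (max (|x i| - (1 - ε) * N x) 0) ^ r = (ε * N x) ^ r)
    {y : Fin p → ℝ} {D : ℝ}
    (hholder : ∀ w : Fin p → ℝ, 0 ≤ w → ∑ i, |y i| * w i ≤ D * (∑ i, w i ^ r) ^ (1 / r))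
    (x : Fin p → ℝ) :
    ∑ i, y i * x i ≤ N x * (ε * D + (1 - ε) * l1Norm p y) := by
  set w : Fin p → ℝ := fun i => max (|x i| - (1 - ε) * N x) 0
  have hw : ∑ i, |y i| * w i ≤ D * (ε * N x) := by
    have := hholder w fun i => le_max_right _ _
    rwa [hNeq x, one_div, Real.rpow_rpow_inv (mul_nonneg hε0 (hN0 x)) hr] at this
  calc ∑ i, y i * x i ≤ ∑ i, |y i| * (w i + (1 - ε) * N x) := by
        refine sum_le_sum fun i _ => ?_
        calc y i * x i ≤ |y i| * |x i| := (le_abs_self _).trans (abs_mul _ _).le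
          _ ≤ |y i| * (w i + (1 - ε) * N x) := by
            gcongr
            linarith [le_max_left (|x i| - (1 - ε) * N x) 0]
    _ = ∑ i, |y i| * w i + (1 - ε) * N x * l1Norm p y := by
        rw [l1Norm, mul_sum, ← sum_add_distrib]
        exact sum_congr rfl fun i _ => by ring
    _ ≤ D * (ε * N x) + (1 - ε) * N x * l1Norm p y := by gcongr
    _ = N x * (ε * D + (1 - ε) * l1Norm p y) := by ring

theorem sSup_sum_mul_epsq_eq (hε0 : 0 < ε) (hε1 : ε ≤ 1) (hr : 0 < r)
    (hN0 : ∀ x : Fin p → ℝ, 0 ≤ N x)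
    (hNeq : ∀ x : Fin p → ℝ,
      ∑ i : Fin p, (max (|x i| - (1 - ε) * N x) 0) ^ r = (ε * N x) ^ r)
    {y : Fin p → ℝ} {D : ℝ}
    (hholder : ∀ w : Fin p → ℝ, 0 ≤ w → ∑ i, |y i| * w i ≤ D * (∑ i, w i ^ r) ^ (1 / r))
    (hattained : ∃ u : Fin p → ℝ, 0 ≤ u ∧ ∑ i, u i ^ r ≤ 1 ∧ ∑ i, |y i| * u i = D) :
    sSup ((fun x : Fin p → ℝ => ∑ i : Fin p, y i * x i) '' {x | N x ≤ 1}) =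
      ε * D + (1 - ε) * l1Norm p y := by
  obtain ⟨u, hu, hu1, rfl⟩ := hattained
  have hbound_nonneg : 0 ≤ ε * ∑ i, |y i| * u i + (1 - ε) * l1Norm p y := by
    have hyu : 0 ≤ ∑ i, |y i| * u i := sum_nonneg fun i _ => mul_nonneg (abs_nonneg _) (hu i)
    have hy : 0 ≤ l1Norm p y := sum_nonneg fun i _ => abs_nonneg _
    have : 0 ≤ 1 - ε := by linarith
    positivity
  set x : Fin p → ℝ := fun i => SignType.sign (y i) * ((1 - ε) + ε * u i)
  have hc (i : Fin p) : 0 ≤ (1 - ε) + ε * u i :=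
    add_nonneg (by linarith) (mul_nonneg hε0.le (hu i))
  refine IsGreatest.csSup_eq ⟨⟨x, ?_, ?_⟩, ?_⟩
  · refine epsq_le_one_of_abs_le hε0 hε1 hr hNeq hu hu1 fun i => ?_
    rw [abs_mul, abs_of_nonneg (hc i)]
    exact mul_le_of_le_one_left (hc i) (by cases SignType.sign (y i) <;> simp)
  · have hyx (i : Fin p) : y i * x i = |y i| * (1 - ε) + ε * (|y i| * u i) := by
      simp only [x]
      rw [← mul_assoc, self_mul_sign]
      ring
    simp only [hyx, sum_add_distrib, ← sum_mul, ← mul_sum, l1Norm]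
    ring
  · rintro _ ⟨x, hx, rfl⟩
    calc _ ≤ N x * (ε * ∑ i, |y i| * u i + (1 - ε) * l1Norm p y) :=
          sum_mul_le_epsq_mul hε0.le hr.ne' hN0 hNeq hholder x
      _ ≤ _ := mul_le_of_le_one_left hbound_nonneg hx

end EpsqNorm

section Duality

variable {p : ℕ}

lemma sum_abs_mul_le_lqNorm_mul {r s : ℝ} (hrs : r.HolderConjugate s) (y w : Fin p → ℝ)
    (hw : 0 ≤ w) : ∑ i, |y i| * w i ≤ lqNorm p r y * (∑ i, w i ^ s) ^ (1 / s) :=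
  Real.inner_le_Lp_mul_Lq_of_nonneg univ hrs (fun _ _ => abs_nonneg _) fun i _ => hw i

lemma exists_sum_abs_mul_eq_lqNorm {r s : ℝ} (hrs : r.HolderConjugate s) (y : Fin p → ℝ) :
    ∃ u : Fin p → ℝ, 0 ≤ u ∧ ∑ i, u i ^ s ≤ 1 ∧ ∑ i, |y i| * u i = lqNorm p r y := by
  set S := ∑ i, |y i| ^ r with hS
  have hS0 : 0 ≤ S := sum_nonneg fun _ _ => by positivity
  have hs0 : s ≠ 0 := hrs.symm.ne_zero
  refine ⟨fun i => |y i| ^ (r / s) / S ^ (1 / s), fun i => by positivity, ?_, ?_⟩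
  · have hpow (i : Fin p) : (|y i| ^ (r / s) / S ^ (1 / s)) ^ s = |y i| ^ r / S := by
      rw [Real.div_rpow (by positivity) (by positivity), ← Real.rpow_mul (abs_nonneg _),
        ← Real.rpow_mul hS0, div_mul_cancel₀ _ hs0, one_div_mul_cancel hs0, Real.rpow_one]
    simp_rw [hpow, ← sum_div]
    exact div_self_le_one S
  · have hexp : 1 + r / s = r := by rw [hrs.div_conj_eq_sub_one]; ring
    have hmul (i : Fin p) : |y i| * (|y i| ^ (r / s) / S ^ (1 / s)) = |y i| ^ r / S ^ (1 / s) := by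
      rw [mul_div_assoc', ← Real.rpow_one_add' (abs_nonneg _) (by rw [hexp]; exact hrs.ne_zero),
        hexp]
    simp_rw [hmul, ← sum_div]
    have hexp' : 1 - s⁻¹ ≠ 0 := by rw [hrs.symm.one_sub_inv]; exact hrs.inv_ne_zero
    rw [lqNorm, ← hS, one_div r, ← hrs.symm.one_sub_inv, Real.rpow_sub' hS0 hexp', Real.rpow_one,
      one_div]

lemma sum_abs_mul_le_linfNorm_mul (y w : Fin p → ℝ) (hw : 0 ≤ w) :
    ∑ i, |y i| * w i ≤ linfNorm p y * ∑ i, w i := by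
  rw [mul_sum]
  refine sum_le_sum fun i _ => mul_le_mul_of_nonneg_right ?_ (hw i)
  exact le_ciSup (f := fun i => |y i|) (Set.finite_range _).bddAbove i

lemma exists_sum_abs_mul_eq_linfNorm (y : Fin p → ℝ) :
    ∃ u : Fin p → ℝ, 0 ≤ u ∧ ∑ i, u i ≤ 1 ∧ ∑ i, |y i| * u i = linfNorm p y := by
  cases isEmpty_or_nonempty (Fin p)
  · exact ⟨0, fun _ => le_rfl, by simp, by simp [linfNorm]⟩
  obtain ⟨i₀, hi₀⟩ := Finite.exists_max fun i => |y i|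
  refine ⟨Pi.single i₀ 1, Pi.single_nonneg.2 zero_le_one, by simp, ?_⟩
  rw [show ∑ i, |y i| * (Pi.single i₀ 1 : Fin p → ℝ) i = |y i₀| by simp [Pi.single_apply]]
  exact (le_ciSup (f := fun i => |y i|) (Set.finite_range _).bddAbove i₀).antisymm (ciSup_le hi₀)

end Duality

/-- **dual norm of the εq-norm.**  Let `N` be the εq-norm for
`q ∈ (1,∞)` and `N1` the ε1-norm (case `q = 1`).  Then for every `y ∈ ℝ^p`,
`sup {⟨y,x⟩ : N x ≤ 1} = ε ‖y‖_{q/(q-1)} + (1-ε) ‖y‖_1`, and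
`sup {⟨y,x⟩ : N1 x ≤ 1} = ε ‖y‖_∞ + (1-ε) ‖y‖_1`. -/
theorem epsq_dual_norm (p : ℕ) (ε q : ℝ)
    (hε0 : 0 < ε) (hε1 : ε ≤ 1) (hq : 1 < q)
    (N : (Fin p → ℝ) → ℝ)
    (hN0 : ∀ x : Fin p → ℝ, 0 ≤ N x)
    (hNeq : ∀ x : Fin p → ℝ,
      ∑ i : Fin p, (max (|x i| - (1 - ε) * N x) 0) ^ q = (ε * N x) ^ q)
    (N1 : (Fin p → ℝ) → ℝ)
    (hN10 : ∀ x : Fin p → ℝ, 0 ≤ N1 x)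
    (hN1eq : ∀ x : Fin p → ℝ,
      ∑ i : Fin p, (max (|x i| - (1 - ε) * N1 x) 0) ^ (1 : ℝ) = (ε * N1 x) ^ (1 : ℝ))
    (y : Fin p → ℝ) :
    sSup ((fun x : Fin p → ℝ => ∑ i : Fin p, y i * x i) '' {x | N x ≤ 1}) =
        ε * lqNorm p (q / (q - 1)) y + (1 - ε) * l1Norm p y ∧
    sSup ((fun x : Fin p → ℝ => ∑ i : Fin p, y i * x i) '' {x | N1 x ≤ 1}) =
        ε * linfNorm p y + (1 - ε) * l1Norm p y := by
  have hconj : (q / (q - 1)).HolderConjugate q := (Real.HolderConjugate.conjExponent hq).symm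
  constructor
  · exact sSup_sum_mul_epsq_eq hε0 hε1 hconj.symm.pos hN0 hNeq
      (sum_abs_mul_le_lqNorm_mul hconj y) (exists_sum_abs_mul_eq_lqNorm hconj y)
  · refine sSup_sum_mul_epsq_eq hε0 hε1 one_pos hN10 hN1eq (fun w hw => ?_) ?_
    · simpa only [Real.rpow_one, div_one] using sum_abs_mul_le_linfNorm_mul y w hw
    · simpa only [Real.rpow_one] using exists_sum_abs_mul_eq_linfNorm y
end

section
/- Fix ε ∈ (0,1], q ∈ (1,∞), α > 0, and x ∈ ℝ^p, and set q* = q/(q−1). Then sup_{β ∈ ℝ^p} [ ⟨x,β⟩ − α(ε‖β‖_{q*} + (1−ε)‖β‖_1) ] equals 0 if ‖x‖_{εq} ≤ α, and equals +∞ if ‖x‖_{εq} > α. In other words, the Fenchel conjugate of β ↦ α(ε‖β‖_{q*} + (1−ε)‖β‖_1) is the indicator function of the ball {x : ‖x‖_{εq} ≤ α}. -/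
lemma lqNorm_nonneg (p : ℕ) (r : ℝ) (β : Fin p → ℝ) : 0 ≤ lqNorm p r β :=
  Real.rpow_nonneg (Finset.sum_nonneg fun i _ => Real.rpow_nonneg (abs_nonneg _) _) _

lemma l1Norm_nonneg (p : ℕ) (β : Fin p → ℝ) : 0 ≤ l1Norm p β :=
  Finset.sum_nonneg fun i _ => abs_nonneg _

lemma lqNorm_zero (p : ℕ) {r : ℝ} (hr : r ≠ 0) : lqNorm p r (0 : Fin p → ℝ) = 0 := by
  simp [lqNorm, Real.zero_rpow hr, Real.zero_rpow (inv_ne_zero hr), one_div]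

lemma lqNorm_smul (p : ℕ) {r : ℝ} (hr : 0 < r) {t : ℝ} (ht : 0 ≤ t) (β : Fin p → ℝ) :
    lqNorm p r (t • β) = t * lqNorm p r β := by
  unfold lqNorm
  have h1 : ∀ i : Fin p, |(t • β) i| ^ r = t ^ r * |β i| ^ r := by
    intro i
    rw [Pi.smul_apply, smul_eq_mul, abs_mul, abs_of_nonneg ht,
      Real.mul_rpow ht (abs_nonneg _)]
  rw [Finset.sum_congr rfl fun i _ => h1 i, ← Finset.mul_sum,
    Real.mul_rpow (Real.rpow_nonneg ht _)
      (Finset.sum_nonneg fun i _ => Real.rpow_nonneg (abs_nonneg _) _),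
    ← Real.rpow_mul ht, mul_one_div, div_self hr.ne', Real.rpow_one]

lemma l1Norm_smul (p : ℕ) {t : ℝ} (ht : 0 ≤ t) (β : Fin p → ℝ) :
    l1Norm p (t • β) = t * l1Norm p β := by
  simp [l1Norm, abs_mul, abs_of_nonneg ht, Finset.mul_sum]

lemma aux_sup_zero {I : Type*} (f : I → ℝ) (i₀ : I) (h0 : f i₀ = 0)
    (h : ∀ i, f i ≤ 0) : (⨆ i, ((f i : ℝ) : EReal)) = 0 := by
  apply le_antisymm
  · exact iSup_le fun i => by exact_mod_cast h i
  · calc (0 : EReal) = ((f i₀ : ℝ) : EReal) := by rw [h0]; rfl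
      _ ≤ _ := le_iSup (fun i => ((f i : ℝ) : EReal)) i₀

lemma aux_sup_top {I : Type*} (f : I → ℝ) {c : ℝ} (hc : 0 < c)
    (h : ∀ t : ℝ, 0 ≤ t → ∃ i, f i = t * c) :
    (⨆ i, ((f i : ℝ) : EReal)) = ⊤ := by
  rw [iSup_eq_top]
  intro b hb
  obtain ⟨r, hbr, -⟩ := EReal.exists_between_coe_real hb
  obtain ⟨i, hi⟩ := h ((|r| + 1) / c) (by positivity)
  refine ⟨i, lt_of_lt_of_le hbr ?_⟩
  rw [EReal.coe_le_coe_iff, hi, div_mul_cancel₀ _ hc.ne']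
  calc r ≤ |r| := le_abs_self r
    _ ≤ |r| + 1 := by linarith

/-- **Fenchel conjugate of the weighted dual-norm penalty.**
Let `N` be the εq-norm, `α > 0`, `q* = q/(q-1)`, and for `x ∈ ℝ^p` consider
`f β = ⟨x, β⟩ - α (ε ‖β‖_{q*} + (1-ε)‖β‖_1)`.  Then `sup_β f β` (computed in the
extended reals) equals `0` when `N x ≤ α` and `+∞` when `N x > α`. -/
theorem epsq_fenchel_conjugate (p : ℕ) (ε q : ℝ)
    (hε0 : 0 < ε) (hε1 : ε ≤ 1) (hq : 1 < q)
    (N : (Fin p → ℝ) → ℝ)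
    (hN0 : ∀ x : Fin p → ℝ, 0 ≤ N x)
    (hNeq : ∀ x : Fin p → ℝ,
      ∑ i : Fin p, (max (|x i| - (1 - ε) * N x) 0) ^ q = (ε * N x) ^ q)
    (α : ℝ) (hα : 0 < α) (x : Fin p → ℝ) :
    (N x ≤ α →
      (⨆ β : Fin p → ℝ,
        ((∑ i : Fin p, x i * β i
          - α * (ε * lqNorm p (q / (q - 1)) β + (1 - ε) * l1Norm p β) : ℝ) : EReal))
        = 0) ∧
    (α < N x →
      (⨆ β : Fin p → ℝ,
        ((∑ i : Fin p, x i * β i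
          - α * (ε * lqNorm p (q / (q - 1)) β + (1 - ε) * l1Norm p β) : ℝ) : EReal))
        = ⊤) := by
  have hq0 : (0 : ℝ) < q := lt_trans one_pos hq
  have hpq : q.HolderConjugate (q / (q - 1)) := Real.HolderConjugate.conjExponent hq
  have hq'0 : 0 < q / (q - 1) := hpq.symm.pos
  set q' : ℝ := q / (q - 1) with hq'def
  set u : Fin p → ℝ := fun i => max (|x i| - (1 - ε) * N x) 0 with hu
  have hu0 : ∀ i, 0 ≤ u i := fun i => le_max_right _ _
  have hS : ∑ i : Fin p, u i ^ q = (ε * N x) ^ q := by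
    simpa [hu] using hNeq x
  have hENnn : 0 ≤ ε * N x := mul_nonneg hε0.le (hN0 x)
  -- the key Hölder-type bound
  have key : ∀ β : Fin p → ℝ, ∑ i : Fin p, x i * β i ≤
      N x * (ε * lqNorm p q' β + (1 - ε) * l1Norm p β) := by
    intro β
    have h1 : ∑ i : Fin p, x i * β i ≤ ∑ i : Fin p, |x i| * |β i| :=
      Finset.sum_le_sum fun i _ => by
        calc x i * β i ≤ |x i * β i| := le_abs_self _
          _ = |x i| * |β i| := abs_mul _ _
    have h2 : ∀ i, |x i| ≤ u i + (1 - ε) * N x := by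
      intro i
      have := le_max_left (|x i| - (1 - ε) * N x) 0
      simp only [hu]
      linarith
    have h3 : ∑ i : Fin p, |x i| * |β i| ≤
        ∑ i : Fin p, (u i * |β i| + (1 - ε) * N x * |β i|) :=
      Finset.sum_le_sum fun i _ => by
        calc |x i| * |β i| ≤ (u i + (1 - ε) * N x) * |β i| :=
              mul_le_mul_of_nonneg_right (h2 i) (abs_nonneg _)
          _ = u i * |β i| + (1 - ε) * N x * |β i| := by ring
    have holder : ∑ i : Fin p, u i * |β i| ≤
        (∑ i : Fin p, u i ^ q) ^ (1 / q) * (∑ i : Fin p, |β i| ^ q') ^ (1 / q') :=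
      Real.inner_le_Lp_mul_Lq_of_nonneg Finset.univ hpq (fun i _ => hu0 i)
        (fun i _ => abs_nonneg _)
    have h4 : ∑ i : Fin p, u i * |β i| ≤ (ε * N x) * lqNorm p q' β := by
      calc ∑ i : Fin p, u i * |β i|
          ≤ (∑ i : Fin p, u i ^ q) ^ (1 / q) * (∑ i : Fin p, |β i| ^ q') ^ (1 / q') :=
            holder
        _ = (ε * N x) * lqNorm p q' β := by
            rw [hS, lqNorm]
            rw [← Real.rpow_mul hENnn, mul_one_div, div_self hq0.ne', Real.rpow_one]
    have h5 : ∑ i : Fin p, (u i * |β i| + (1 - ε) * N x * |β i|)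
        = (∑ i : Fin p, u i * |β i|) + (1 - ε) * N x * l1Norm p β := by
      rw [Finset.sum_add_distrib, ← Finset.mul_sum, l1Norm]
    calc ∑ i : Fin p, x i * β i ≤ ∑ i : Fin p, |x i| * |β i| := h1
      _ ≤ ∑ i : Fin p, (u i * |β i| + (1 - ε) * N x * |β i|) := h3
      _ = (∑ i : Fin p, u i * |β i|) + (1 - ε) * N x * l1Norm p β := h5
      _ ≤ (ε * N x) * lqNorm p q' β + (1 - ε) * N x * l1Norm p β := by linarith [h4]
      _ = N x * (ε * lqNorm p q' β + (1 - ε) * l1Norm p β) := by ring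
  constructor
  · -- case `N x ≤ α`
    intro hNα
    apply aux_sup_zero _ (0 : Fin p → ℝ)
    · simp [lqNorm_zero p hq'0.ne', l1Norm]
    · intro β
      have hb : 0 ≤ ε * lqNorm p q' β + (1 - ε) * l1Norm p β :=
        add_nonneg (mul_nonneg hε0.le (lqNorm_nonneg _ _ _))
          (mul_nonneg (by linarith) (l1Norm_nonneg _ _))
      have := mul_le_mul_of_nonneg_right hNα hb
      linarith [key β]
  · -- case `α < N x`
    intro hαN
    have hNx : 0 < N x := lt_trans hα hαN
    have hEN : 0 < ε * N x := mul_pos hε0 hNx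
    have hq1ne : q - 1 ≠ 0 := by linarith
    set sg : Fin p → ℝ := fun i => if 0 ≤ x i then 1 else -1 with hsg
    set β₀ : Fin p → ℝ := fun i => sg i * u i ^ (q - 1) with hβ₀
    have habs : ∀ i, |β₀ i| = u i ^ (q - 1) := by
      intro i
      simp only [hβ₀, hsg]
      by_cases hxi : 0 ≤ x i <;>
        simp [hxi, abs_mul, abs_of_nonneg (Real.rpow_nonneg (hu0 i) _)]
    have hxb : ∀ i, x i * β₀ i = |x i| * u i ^ (q - 1) := by
      intro i
      simp only [hβ₀, hsg]
      by_cases hxi : 0 ≤ x i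
      · simp [hxi, abs_of_nonneg hxi]
      · push_neg at hxi
        simp only [if_neg (not_le.mpr hxi), abs_of_neg hxi]
        ring
    have hterm : ∀ i, |x i| * u i ^ (q - 1) = u i ^ q + (1 - ε) * N x * u i ^ (q - 1) := by
      intro i
      rcases eq_or_lt_of_le (hu0 i) with h0 | hpos
      · rw [← h0, Real.zero_rpow hq1ne, Real.zero_rpow hq0.ne']
        ring
      · have hux : u i = |x i| - (1 - ε) * N x := by
          have : (0 : ℝ) < max (|x i| - (1 - ε) * N x) 0 := by simpa [hu] using hpos
          have h' : 0 < |x i| - (1 - ε) * N x := by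
            by_contra hcon
            push_neg at hcon
            rw [max_eq_right hcon] at this
            exact lt_irrefl 0 this
          simp [hu, max_eq_left h'.le]
        have hq_split : u i ^ q = u i * u i ^ (q - 1) := by
          have : u i ^ q = u i ^ (1 + (q - 1)) := by ring_nf
          rw [this, Real.rpow_add hpos, Real.rpow_one]
        rw [hq_split]
        have : |x i| = u i + (1 - ε) * N x := by rw [hux]; ring
        rw [this]
        ring
    set T : ℝ := ∑ i : Fin p, u i ^ (q - 1) with hT
    have hTnn : 0 ≤ T := Finset.sum_nonneg fun i _ => Real.rpow_nonneg (hu0 i) _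
    have hsum : ∑ i : Fin p, x i * β₀ i = (ε * N x) ^ q + (1 - ε) * N x * T := by
      calc ∑ i : Fin p, x i * β₀ i
          = ∑ i : Fin p, (u i ^ q + (1 - ε) * N x * u i ^ (q - 1)) := by
            refine Finset.sum_congr rfl fun i _ => ?_
            rw [hxb i, hterm i]
        _ = (∑ i : Fin p, u i ^ q) + (1 - ε) * N x * T := by
            rw [Finset.sum_add_distrib, ← Finset.mul_sum]
        _ = (ε * N x) ^ q + (1 - ε) * N x * T := by rw [hS]
    have hl1 : l1Norm p β₀ = T := by
      rw [l1Norm]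
      exact Finset.sum_congr rfl fun i _ => habs i
    have hlq : lqNorm p q' β₀ = (ε * N x) ^ (q - 1) := by
      rw [lqNorm]
      have h1 : ∀ i : Fin p, |β₀ i| ^ q' = u i ^ q := by
        intro i
        rw [habs i, ← Real.rpow_mul (hu0 i), hpq.sub_one_mul_conj]
      rw [Finset.sum_congr rfl fun i _ => h1 i, hS,
        ← Real.rpow_mul hENnn, mul_one_div, hpq.div_conj_eq_sub_one]
    -- the value at β₀ is positive
    set c : ℝ := ∑ i : Fin p, x i * β₀ i
      - α * (ε * lqNorm p q' β₀ + (1 - ε) * l1Norm p β₀) with hc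
    have hP : 0 < (ε * N x) ^ (q - 1) := Real.rpow_pos_of_pos hEN _
    have hpowsplit : (ε * N x) ^ q = (ε * N x) * (ε * N x) ^ (q - 1) := by
      have h1 : (ε * N x) ^ q = (ε * N x) ^ (1 + (q - 1)) := by ring_nf
      rw [h1, Real.rpow_add hEN, Real.rpow_one]
    have hcval : c = ε * (N x - α) * (ε * N x) ^ (q - 1) + (1 - ε) * (N x - α) * T := by
      rw [hc, hsum, hl1, hlq, hpowsplit]
      ring
    have hcpos : 0 < c := by
      rw [hcval]
      have h1 : 0 < ε * (N x - α) * (ε * N x) ^ (q - 1) :=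
        mul_pos (mul_pos hε0 (by linarith)) hP
      have h2 : 0 ≤ (1 - ε) * (N x - α) * T :=
        mul_nonneg (mul_nonneg (by linarith) (by linarith)) hTnn
      linarith
    apply aux_sup_top _ hcpos
    intro t ht
    refine ⟨t • β₀, ?_⟩
    have hsmulsum : ∑ i : Fin p, x i * (t • β₀) i = t * ∑ i : Fin p, x i * β₀ i := by
      rw [Finset.mul_sum]
      exact Finset.sum_congr rfl fun i _ => by
        simp [Pi.smul_apply, smul_eq_mul]; ring
    rw [hsmulsum, lqNorm_smul p hq'0 ht, l1Norm_smul p ht, hc]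
    ring
end

section
/- Fix a partition of {1,…,p} into G groups (1),…,(G), τ ∈ (0,1), weights w_g > 0, and exponents α_g ∈ (1,∞), and set ε_g = (1−τ)w_g/(τ+(1−τ)w_g) and α_g* = α_g/(α_g−1). Then for every x ∈ ℝ^p, the dual of the double sparsity norm satisfies ‖x‖_ds^* := sup{⟨x,β⟩ : ‖β‖_ds ≤ 1} = max_{g ∈ {1,…,G}} ‖x_{(g)}‖_{ε_g α_g*} / (τ + (1−τ)w_g). -/
open Finset

/-- The ℓ_r norm of the restriction of `x ∈ ℝ^p` to group `g` of the partition `grp`. -/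
noncomputable def groupLq {p G : ℕ} (grp : Fin p → Fin G) (r : ℝ) (g : Fin G)
    (x : Fin p → ℝ) : ℝ :=
  (∑ i ∈ Finset.univ.filter (fun i => grp i = g), |x i| ^ r) ^ (1 / r)

/-- The double sparsity norm
`‖β‖_ds = τ‖β‖₁ + (1-τ) ∑ g, w g * ‖β_{(g)}‖_{α g}`. -/
noncomputable def dsNorm {p G : ℕ} (grp : Fin p → Fin G) (τ : ℝ) (w : Fin G → ℝ)
    (α : Fin G → ℝ) (β : Fin p → ℝ) : ℝ :=
  τ * ∑ i : Fin p, |β i| + (1 - τ) * ∑ g : Fin G, w g * groupLq grp (α g) g β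

/-!
Split `⟨x, β⟩` along the groups. On group `g`, for any threshold `s`, the bound
`|xᵢ| ≤ (|xᵢ| - s)₊ + s` and Hölder with `q = α_g*` give
`⟨x_g, β_g⟩ ≤ s ‖β_g‖₁ + ‖(|x_g| - s)₊‖_q ‖β_g‖_{α_g}`. Dividing the defining equation of the
`ε_g q`-norm by `τ + (1 - τ) w_g` shows that `t_g = ‖x_g‖_{ε_g q} / (τ + (1 - τ) w_g)` satisfies
`‖(|x_g| - τ t_g)₊‖_q = (1 - τ) w_g t_g`. Hence `⟨x, β⟩ ≤ ∑_g t_g N_g(β) ≤ (max_g t_g) ‖β‖_ds`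
with `N_g(β) = τ ‖β_g‖₁ + (1 - τ) w_g ‖β_g‖_{α_g}`. The bound is attained on a maximizing group
by `βᵢ ∝ sign xᵢ · (|xᵢ| - τ t_g)₊ ^ (q - 1)`, the equality case of both inequalities.
-/

section SoftThreshold

variable {ι : Type*} (S : Finset ι)

noncomputable def l1AddLpNorm (b c a : ℝ) (β : ι → ℝ) : ℝ :=
  b * ∑ i ∈ S, |β i| + c * (∑ i ∈ S, |β i| ^ a) ^ (1 / a)

variable {S}

lemma l1AddLpNorm_nonneg {b c : ℝ} (hb : 0 ≤ b) (hc : 0 ≤ c) (a : ℝ) (β : ι → ℝ) :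
    0 ≤ l1AddLpNorm S b c a β := by
  unfold l1AddLpNorm
  have := sum_nonneg fun i (_ : i ∈ S) => abs_nonneg (β i)
  have := Real.rpow_nonneg (sum_nonneg fun i (_ : i ∈ S) => Real.rpow_nonneg (abs_nonneg (β i)) a)
    (1 / a)
  positivity

lemma l1AddLpNorm_eq_zero {a : ℝ} (ha : a ≠ 0) (b c : ℝ) {β : ι → ℝ} (hβ : ∀ i ∈ S, β i = 0) :
    l1AddLpNorm S b c a β = 0 := by
  have hl1 : ∑ i ∈ S, |β i| = 0 := sum_eq_zero fun i hi => by simp [hβ i hi]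
  have hlp : ∑ i ∈ S, |β i| ^ a = 0 := sum_eq_zero fun i hi => by simp [hβ i hi, ha]
  simp [l1AddLpNorm, hl1, hlp, ha]

lemma l1AddLpNorm_smul {a : ℝ} (ha : 0 < a) (b c : ℝ) {k : ℝ} (hk : 0 ≤ k) (β : ι → ℝ) :
    l1AddLpNorm S b c a (k • β) = k * l1AddLpNorm S b c a β := by
  have hroot : (k ^ a) ^ (1 / a) = k := by
    rw [← Real.rpow_mul hk, mul_one_div_cancel ha.ne', Real.rpow_one]
  simp only [l1AddLpNorm, Pi.smul_apply, smul_eq_mul, abs_mul, abs_of_nonneg hk,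
    Real.mul_rpow hk (abs_nonneg _), ← mul_sum]
  rw [Real.mul_rpow (Real.rpow_nonneg hk a)
    (sum_nonneg fun i _ => Real.rpow_nonneg (abs_nonneg _) a), hroot]
  ring

variable (x : ι → ℝ)

lemma sum_mul_le_soft_threshold {a q : ℝ} (hpq : a.HolderConjugate q) (s : ℝ) (β : ι → ℝ) :
    ∑ i ∈ S, x i * β i ≤ s * ∑ i ∈ S, |β i|
      + (∑ i ∈ S, max (|x i| - s) 0 ^ q) ^ (1 / q) * (∑ i ∈ S, |β i| ^ a) ^ (1 / a) := by
  have hpoint : ∀ i ∈ S, x i * β i ≤ s * |β i| + max (|x i| - s) 0 * |β i| := fun i _ => by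
    calc x i * β i ≤ |x i| * |β i| := by rw [← abs_mul]; exact le_abs_self _
      _ ≤ (s + max (|x i| - s) 0) * |β i| := by gcongr; linarith [le_max_left (|x i| - s) 0]
      _ = _ := by ring
  have hHolder := Real.inner_le_Lp_mul_Lq_of_nonneg S hpq.symm
    (fun i _ => le_max_right (|x i| - s) 0) (fun i _ => abs_nonneg (β i))
  calc ∑ i ∈ S, x i * β i ≤ ∑ i ∈ S, (s * |β i| + max (|x i| - s) 0 * |β i|) := sum_le_sum hpoint
    _ ≤ _ := by rw [sum_add_distrib, ← mul_sum]; gcongr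

lemma sum_mul_le_mul_l1AddLpNorm {a q b c t : ℝ} (hpq : a.HolderConjugate q) (hct : 0 ≤ c * t)
    (heq : ∑ i ∈ S, max (|x i| - b * t) 0 ^ q = (c * t) ^ q) (β : ι → ℝ) :
    ∑ i ∈ S, x i * β i ≤ t * l1AddLpNorm S b c a β := by
  have h := sum_mul_le_soft_threshold (S := S) x hpq (b * t) β
  rw [heq, ← Real.rpow_mul hct, mul_one_div_cancel hpq.symm.ne_zero, Real.rpow_one] at h
  rw [l1AddLpNorm]
  linarith

lemma abs_sign_mul_soft_threshold_rpow {s q : ℝ} (hs : 0 ≤ s) (hq : 1 < q) (y : ℝ) :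
    |(SignType.sign y : ℝ) * max (|y| - s) 0 ^ (q - 1)| = max (|y| - s) 0 ^ (q - 1) := by
  rcases eq_or_ne y 0 with rfl | hy
  · simp [hs, Real.zero_rpow (sub_pos.mpr hq).ne']
  · have hsign : |(SignType.sign y : ℝ)| = 1 := by
      rcases hy.lt_or_gt with h | h <;> simp [sign_neg, sign_pos, h]
    rw [abs_mul, hsign, one_mul, abs_of_nonneg (Real.rpow_nonneg (le_max_right _ _) _)]

lemma mul_sign_mul_soft_threshold_rpow {s q : ℝ} (hq : 1 < q) (y : ℝ) :
    y * ((SignType.sign y : ℝ) * max (|y| - s) 0 ^ (q - 1))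
      = max (|y| - s) 0 ^ q + s * max (|y| - s) 0 ^ (q - 1) := by
  rw [← mul_assoc, self_mul_sign]
  rcases le_or_gt (|y| - s) 0 with h | h
  · rw [max_eq_right h, Real.zero_rpow (sub_pos.mpr hq).ne', Real.zero_rpow (by linarith)]
    ring
  · rw [max_eq_left h.le, Real.rpow_sub_one h.ne']
    field_simp
    ring

lemma exists_sum_mul_eq_mul_l1AddLpNorm {a q b c t : ℝ} (hpq : a.HolderConjugate q)
    (hb : 0 ≤ b) (hc : 0 < c) (ht : 0 < t)
    (heq : ∑ i ∈ S, max (|x i| - b * t) 0 ^ q = (c * t) ^ q) :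
    ∃ γ : ι → ℝ, (∀ i ∉ S, γ i = 0) ∧ 0 < l1AddLpNorm S b c a γ ∧
      ∑ i ∈ S, x i * γ i = t * l1AddLpNorm S b c a γ := by
  classical
  set u : ι → ℝ := fun i => max (|x i| - b * t) 0
  set γ : ι → ℝ := fun i => if i ∈ S then (SignType.sign (x i) : ℝ) * u i ^ (q - 1) else 0
  have hq : 1 < q := hpq.symm.lt
  have hct : 0 < c * t := mul_pos hc ht
  have habs : ∀ i ∈ S, |γ i| = u i ^ (q - 1) := fun i hi => by
    simp only [γ, if_pos hi]
    exact abs_sign_mul_soft_threshold_rpow (by positivity) hq _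
  have hlp : (∑ i ∈ S, |γ i| ^ a) ^ (1 / a) = (c * t) ^ (q - 1) := by
    rw [sum_congr rfl fun i hi => by
        rw [habs i hi, ← Real.rpow_mul (le_max_right _ _), hpq.symm.sub_one_mul_conj],
      heq, ← Real.rpow_mul hct.le, mul_one_div, hpq.symm.div_conj_eq_sub_one]
  have hnorm : l1AddLpNorm S b c a γ = b * ∑ i ∈ S, u i ^ (q - 1) + c * (c * t) ^ (q - 1) := by
    rw [l1AddLpNorm, hlp, sum_congr rfl habs]
  refine ⟨γ, fun i hi => if_neg hi, ?_, ?_⟩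
  · have := sum_nonneg fun i (_ : i ∈ S) =>
      Real.rpow_nonneg (le_max_right (|x i| - b * t) 0) (q - 1)
    rw [hnorm]
    positivity
  · rw [hnorm, sum_congr rfl fun i hi => by
        simp only [γ, if_pos hi]
        exact mul_sign_mul_soft_threshold_rpow hq (x i),
      sum_add_distrib, heq, ← mul_sum, Real.rpow_sub_one hct.ne']
    simp only [u]
    field_simp
    ring

lemma exists_l1AddLpNorm_eq_one_sum_mul_eq {a q b c t : ℝ} (hpq : a.HolderConjugate q)
    (hb : 0 ≤ b) (hc : 0 < c) (ht : 0 < t)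
    (heq : ∑ i ∈ S, max (|x i| - b * t) 0 ^ q = (c * t) ^ q) :
    ∃ β : ι → ℝ, (∀ i ∉ S, β i = 0) ∧ l1AddLpNorm S b c a β = 1 ∧ ∑ i ∈ S, x i * β i = t := by
  obtain ⟨γ, hsupp, hpos, hsum⟩ := exists_sum_mul_eq_mul_l1AddLpNorm x hpq hb hc ht heq
  refine ⟨(l1AddLpNorm S b c a γ)⁻¹ • γ, fun i hi => by simp [hsupp i hi], ?_, ?_⟩
  · rw [l1AddLpNorm_smul hpq.pos b c (inv_nonneg.mpr hpos.le), inv_mul_cancel₀ hpos.ne']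
  · simp only [Pi.smul_apply, smul_eq_mul, mul_left_comm (x _), ← mul_sum, hsum]
    field_simp

end SoftThreshold

section DoubleSparsity

variable {p G : ℕ} (grp : Fin p → Fin G) (τ : ℝ) (w α : Fin G → ℝ)

lemma dsNorm_eq_sum_l1AddLpNorm (β : Fin p → ℝ) :
    dsNorm grp τ w α β = ∑ g, l1AddLpNorm {i | grp i = g} τ ((1 - τ) * w g) (α g) β := by
  simp only [dsNorm, l1AddLpNorm, groupLq, sum_add_distrib, ← mul_sum, sum_fiberwise, mul_assoc]

lemma dsNorm_zero (hα : ∀ g, α g ≠ 0) : dsNorm grp τ w α 0 = 0 := by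
  rw [dsNorm_eq_sum_l1AddLpNorm]
  exact sum_eq_zero fun g _ => l1AddLpNorm_eq_zero (hα g) _ _ fun i _ => rfl

lemma dsNorm_of_eq_zero_off_group (hα : ∀ g, α g ≠ 0) {g : Fin G} {β : Fin p → ℝ}
    (hβ : ∀ i, grp i ≠ g → β i = 0) :
    dsNorm grp τ w α β = l1AddLpNorm {i | grp i = g} τ ((1 - τ) * w g) (α g) β := by
  rw [dsNorm_eq_sum_l1AddLpNorm, sum_eq_single g (fun g' _ hg' => ?_) (by simp)]
  refine l1AddLpNorm_eq_zero (hα g') _ _ fun i hi => hβ i ?_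
  rw [(mem_filter.mp hi).2]
  exact hg'

variable {grp τ w α}

lemma sum_mul_le_iSup_mul_dsNorm (hτ0 : 0 ≤ τ) (hτ1 : τ ≤ 1) (hw : ∀ g, 0 ≤ w g)
    (hα : ∀ g, 1 < α g) (x : Fin p → ℝ) {t : Fin G → ℝ} (ht : ∀ g, 0 ≤ t g)
    (heq : ∀ g, ∑ i with grp i = g, max (|x i| - τ * t g) 0 ^ (α g / (α g - 1))
      = ((1 - τ) * w g * t g) ^ (α g / (α g - 1))) (β : Fin p → ℝ) :
    ∑ i, x i * β i ≤ (⨆ g, t g) * dsNorm grp τ w α β := by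
  have hc : ∀ g, 0 ≤ (1 - τ) * w g := fun g => mul_nonneg (by linarith) (hw g)
  calc ∑ i, x i * β i = ∑ g, ∑ i with grp i = g, x i * β i := (sum_fiberwise _ _ _).symm
    _ ≤ ∑ g, t g * l1AddLpNorm {i | grp i = g} τ ((1 - τ) * w g) (α g) β :=
      sum_le_sum fun g _ => sum_mul_le_mul_l1AddLpNorm x
        (Real.HolderConjugate.conjExponent (hα g)) (mul_nonneg (hc g) (ht g)) (heq g) β
    _ ≤ ∑ g, (⨆ g, t g) * l1AddLpNorm {i | grp i = g} τ ((1 - τ) * w g) (α g) β := by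
      gcongr with g
      · exact l1AddLpNorm_nonneg hτ0 (hc g) _ _
      · exact le_ciSup (Set.finite_range t).bddAbove g
    _ = (⨆ g, t g) * dsNorm grp τ w α β := by rw [← mul_sum, dsNorm_eq_sum_l1AddLpNorm]

lemma exists_dsNorm_le_one_le_sum_mul (hτ0 : 0 ≤ τ) (hτ1 : τ < 1) (hw : ∀ g, 0 < w g)
    (hα : ∀ g, 1 < α g) (x : Fin p → ℝ) {g : Fin G} {t : ℝ} (ht : 0 ≤ t)
    (heq : ∑ i with grp i = g, max (|x i| - τ * t) 0 ^ (α g / (α g - 1))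
      = ((1 - τ) * w g * t) ^ (α g / (α g - 1))) :
    ∃ β, dsNorm grp τ w α β ≤ 1 ∧ t ≤ ∑ i, x i * β i := by
  have hα0 : ∀ g, α g ≠ 0 := fun g => by linarith [hα g]
  rcases ht.eq_or_lt with rfl | ht
  · exact ⟨0, by simp [dsNorm_zero grp τ w α hα0], by simp⟩
  obtain ⟨β, hsupp, hnorm, hsum⟩ := exists_l1AddLpNorm_eq_one_sum_mul_eq x
    (Real.HolderConjugate.conjExponent (hα g)) hτ0 (mul_pos (by linarith) (hw g)) ht heq
  have hβ : ∀ i, grp i ≠ g → β i = 0 := fun i hi => hsupp i (by simpa using hi)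
  refine ⟨β, (dsNorm_of_eq_zero_off_group grp τ w α hα0 hβ).trans hnorm |>.le, ?_⟩
  rw [← sum_subset (filter_subset _ univ) fun i _ hi => by rw [hsupp i hi, mul_zero], hsum]

end DoubleSparsity

theorem dsNorm_dual_general (p G : ℕ) (grp : Fin p → Fin G)
    (τ : ℝ) (hτ0 : 0 < τ) (hτ1 : τ < 1)
    (w : Fin G → ℝ) (hw : ∀ g, 0 < w g)
    (α : Fin G → ℝ) (hα : ∀ g, 1 < α g)
    (Ng : Fin G → (Fin p → ℝ) → ℝ)
    (hNg0 : ∀ g x, 0 ≤ Ng g x)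
    (hNgeq : ∀ (g : Fin G) (x : Fin p → ℝ),
      ∑ i ∈ Finset.univ.filter (fun i => grp i = g),
          (max (|x i| - (1 - (1 - τ) * w g / (τ + (1 - τ) * w g)) * Ng g x) 0)
            ^ (α g / (α g - 1))
        = ((1 - τ) * w g / (τ + (1 - τ) * w g) * Ng g x) ^ (α g / (α g - 1)))
    (x : Fin p → ℝ) :
    sSup ((fun β : Fin p → ℝ => ∑ i : Fin p, x i * β i) '' {β | dsNorm grp τ w α β ≤ 1})
      = ⨆ g : Fin G, Ng g x / (τ + (1 - τ) * w g) := by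
  set t : Fin G → ℝ := fun g => Ng g x / (τ + (1 - τ) * w g)
  have hc : ∀ g, 0 < τ + (1 - τ) * w g := fun g => by nlinarith [hw g]
  have ht : ∀ g, 0 ≤ t g := fun g => div_nonneg (hNg0 g x) (hc g).le
  have heq : ∀ g, ∑ i with grp i = g, max (|x i| - τ * t g) 0 ^ (α g / (α g - 1))
      = ((1 - τ) * w g * t g) ^ (α g / (α g - 1)) := fun g => by
    have hthr : (1 - (1 - τ) * w g / (τ + (1 - τ) * w g)) * Ng g x = τ * t g := by
      simp only [t]; field_simp [(hc g).ne']; ring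
    have hrad : (1 - τ) * w g / (τ + (1 - τ) * w g) * Ng g x = (1 - τ) * w g * t g := by
      simp only [t]; ring
    simpa only [hthr, hrad] using hNgeq g x
  have hub : ∀ β ∈ {β | dsNorm grp τ w α β ≤ 1}, ∑ i, x i * β i ≤ ⨆ g, t g := fun β hβ =>
    (sum_mul_le_iSup_mul_dsNorm hτ0.le hτ1.le (fun g => (hw g).le) hα x ht heq β).trans
      (mul_le_of_le_one_right (Real.iSup_nonneg ht) hβ)
  have hbdd := (⟨_, Set.forall_mem_image.2 hub⟩ : BddAbove _)
  refine le_antisymm (Real.sSup_le (Set.forall_mem_image.2 hub) (Real.iSup_nonneg ht))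
    (Real.iSup_le (fun g => ?_) ?_)
  · obtain ⟨β, hβ, hle⟩ := exists_dsNorm_le_one_le_sum_mul hτ0.le hτ1 hw hα x (ht g) (heq g)
    exact hle.trans (le_csSup hbdd ⟨β, hβ, rfl⟩)
  · exact le_csSup hbdd ⟨0, by simp [dsNorm_zero grp τ w α fun g => by linarith [hα g]], by simp⟩

/-- **dual of the double sparsity norm.**
With `ε_g = (1-τ)w_g/(τ+(1-τ)w_g)` and `α_g* = α_g/(α_g-1)`, let `Ng g x` denote the
`(ε_g, α_g*)`-norm of the restriction of `x` to group `g` (the unique nonnegative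
solution of the defining equation over the coordinates of group `g`).  Then for every
`x ∈ ℝ^p`,
`sup {⟨x,β⟩ : ‖β‖_ds ≤ 1} = max_g Ng g x / (τ + (1-τ) w_g)`. -/
theorem dsNorm_dual (p G : ℕ) (hG : 0 < G) (grp : Fin p → Fin G)
    (hsurj : Function.Surjective grp)
    (τ : ℝ) (hτ0 : 0 < τ) (hτ1 : τ < 1)
    (w : Fin G → ℝ) (hw : ∀ g, 0 < w g)
    (α : Fin G → ℝ) (hα : ∀ g, 1 < α g)
    (Ng : Fin G → (Fin p → ℝ) → ℝ)
    (hNg0 : ∀ g x, 0 ≤ Ng g x)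
    (hNgeq : ∀ (g : Fin G) (x : Fin p → ℝ),
      ∑ i ∈ Finset.univ.filter (fun i => grp i = g),
          (max (|x i| - (1 - (1 - τ) * w g / (τ + (1 - τ) * w g)) * Ng g x) 0)
            ^ (α g / (α g - 1))
        = ((1 - τ) * w g / (τ + (1 - τ) * w g) * Ng g x) ^ (α g / (α g - 1)))
    (x : Fin p → ℝ) :
    sSup ((fun β : Fin p → ℝ => ∑ i : Fin p, x i * β i) '' {β | dsNorm grp τ w α β ≤ 1})
      = ⨆ g : Fin G, Ng g x / (τ + (1 - τ) * w g) :=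
  dsNorm_dual_general p G grp τ hτ0 hτ1 w hw α hα Ng hNg0 hNgeq x
end

section
/- Fix a partition of {1,…,p} into d groups (1),…,(d). Then every x ∈ ℝ^p satisfies ‖x‖_2 ≤ ‖x‖_{1,2}/√d + √d·‖x‖_{∞,2}/4, where ‖x‖_{1,2} = ∑_{g=1}^d ‖x_{(g)}‖_2 and ‖x‖_{∞,2} = max_{1≤g≤d} ‖x_{(g)}‖_2. -/
open Finset
set_option maxHeartbeats 1000000

/-- For a partition of `{1,…,p}` into `d` groups,
`‖x‖₂ ≤ ‖x‖_{1,2}/√d + √d ‖x‖_{∞,2}/4`, where `‖x‖_{1,2}` is the sum of the group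
Euclidean norms and `‖x‖_{∞,2}` their maximum. -/
theorem l2_le_group_l12_linf2 (p d : ℕ) (hd : 0 < d) (grp : Fin p → Fin d)
    (hsurj : Function.Surjective grp) (x : Fin p → ℝ) :
    Real.sqrt (∑ i : Fin p, (x i) ^ 2) ≤
      (∑ g : Fin d,
          Real.sqrt (∑ i ∈ Finset.univ.filter (fun i => grp i = g), (x i) ^ 2))
        / Real.sqrt d
      + Real.sqrt d *
          (⨆ g : Fin d,
            Real.sqrt (∑ i ∈ Finset.univ.filter (fun i => grp i = g), (x i) ^ 2)) / 4 := by
  haveI : Nonempty (Fin d) := Fin.pos_iff_nonempty.mp hd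
  set a : Fin d → ℝ := fun g =>
    Real.sqrt (∑ i ∈ Finset.univ.filter (fun i => grp i = g), (x i) ^ 2) with ha
  have ha0 : ∀ g, 0 ≤ a g := fun g => Real.sqrt_nonneg _
  set m : ℝ := ⨆ g, a g with hm
  set s : ℝ := ∑ g, a g with hs
  have hbdd : BddAbove (Set.range a) := (Set.finite_range a).bddAbove
  have hle : ∀ g, a g ≤ m := fun g => le_ciSup hbdd g
  have hm0 : 0 ≤ m := (ha0 (Classical.arbitrary _)).trans (hle _)
  have hs0 : 0 ≤ s := Finset.sum_nonneg fun g _ => ha0 g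
  have hsq : ∀ g, a g ^ 2 = ∑ i ∈ Finset.univ.filter (fun i => grp i = g), (x i) ^ 2 :=
    fun g => Real.sq_sqrt (Finset.sum_nonneg fun i _ => sq_nonneg _)
  have hsum : ∑ i : Fin p, (x i) ^ 2 = ∑ g, a g ^ 2 := by
    rw [← Finset.sum_fiberwise Finset.univ grp (fun i => (x i) ^ 2)]
    exact Finset.sum_congr rfl fun g _ => (hsq g).symm
  have h1 : ∑ g, a g ^ 2 ≤ m * s := by
    rw [hs, Finset.mul_sum]
    refine Finset.sum_le_sum fun g _ => ?_
    have := mul_le_mul_of_nonneg_right (hle g) (ha0 g)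
    nlinarith [this]
  have hsd : (0:ℝ) < Real.sqrt d := Real.sqrt_pos.mpr (by exact_mod_cast hd)
  have hkey : m * s ≤ (s / Real.sqrt d + Real.sqrt d * m / 4) ^ 2 := by
    have hid : (s / Real.sqrt d + Real.sqrt d * m / 4) ^ 2 - m * s
        = (s / Real.sqrt d - Real.sqrt d * m / 4) ^ 2 := by
      field_simp
      ring
    nlinarith [sq_nonneg (s / Real.sqrt d - Real.sqrt d * m / 4)]
  have hR0 : 0 ≤ s / Real.sqrt d + Real.sqrt d * m / 4 := by
    have h1' := div_nonneg hs0 hsd.le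
    have h2' := mul_nonneg hsd.le hm0
    linarith
  calc Real.sqrt (∑ i : Fin p, (x i) ^ 2)
      ≤ Real.sqrt ((s / Real.sqrt d + Real.sqrt d * m / 4) ^ 2) := by
        apply Real.sqrt_le_sqrt
        rw [hsum]
        exact h1.trans hkey
    _ = s / Real.sqrt d + Real.sqrt d * m / 4 := Real.sqrt_sq hR0
end
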